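/- arXiv:math/0005062 — 5 statements merged into one kernel-verified Lean document; each statement's English description precedes it below -/
import Mathlib

section
/- If 𝒫 is an admissible, linearly repetitive set of abstract patterns in ℝ^d, then the tiling space Ω(𝒫) is compact with respect to the metric d. -/
open Metric Set Filter MeasureTheory Topology

noncomputable section

/-- Points of `ℝ^d`. -/
abbrev Pt (d : ℕ) := EuclideanSpace ℝ (Fin d)

variable (d : ℕ)

/-- A tile: a subset of `ℝ^d` homeomorphic to the closed unit ball. -/
def IsTile (m : Set (Pt d)) : Prop :=
  Nonempty (m ≃ₜ (Metric.closedBall (0 : Pt d) 1))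

/-- A pattern: a finite nonempty collection of tiles whose interiors are pairwise disjoint. -/
def IsPattern (M : Set (Set (Pt d))) : Prop :=
  M.Finite ∧ M.Nonempty ∧ (∀ m ∈ M, IsTile d m) ∧
    M.Pairwise fun m m' => interior m ∩ interior m' = ∅

/-- A tiling of `ℝ^d`: a collection of tiles with pairwise disjoint interiors covering `ℝ^d`. -/
def IsTiling (T : Set (Set (Pt d))) : Prop :=
  (∀ m ∈ T, IsTile d m) ∧
    (T.Pairwise fun m m' => interior m ∩ interior m' = ∅) ∧ ⋃₀ T = Set.univ

/-- Translation of a pattern by `t`. -/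
def patTrans (t : Pt d) (M : Set (Set (Pt d))) : Set (Set (Pt d)) :=
  (fun m => (fun x => x + t) '' m) '' M

/-- Support (underlying set) of a pattern. -/
def supp (M : Set (Set (Pt d))) : Set (Pt d) := ⋃₀ M

/-- Inner radius: the largest `r` such that some closed ball of radius `r` fits inside `s(M)`. -/
def rIn (M : Set (Set (Pt d))) : ℝ :=
  sSup {r : ℝ | ∃ x : Pt d, Metric.closedBall x r ⊆ supp d M}

/-- Outer radius: the smallest `r` such that some closed ball of radius `r` contains `s(M)`. -/
def rOut (M : Set (Set (Pt d))) : ℝ :=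
  sInf {r : ℝ | ∃ x : Pt d, supp d M ⊆ Metric.closedBall x r}

/-- The pattern class of `P` is a subpattern of (the class of) `Q`:
some translate of `P` is contained in `Q`. -/
def SubpatternClass (P Q : Set (Set (Pt d))) : Prop :=
  ∃ t : Pt d, patTrans d t P ⊆ Q

/-- A set of abstract patterns is modelled as a translation-closed set `Ps` of concrete
patterns (the union of the pattern classes).  `Admissible` encodes conditions
(i)–(iii) of Definition 2.1. -/
structure Admissible (Ps : Set (Set (Set (Pt d)))) : Prop where
  pattern : ∀ P ∈ Ps, IsPattern d P
  transClosed : ∀ (t : Pt d), ∀ P ∈ Ps, patTrans d t P ∈ Ps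
  subClosed : ∀ P ∈ Ps, ∀ Q : Set (Set (Pt d)), IsPattern d Q → Q ⊆ P → Q ∈ Ps
  tileBounds : ∃ rmin rmax : ℝ, 0 < rmin ∧ rmin ≤ rmax ∧
    ∀ m : Set (Pt d), ({m} : Set (Set (Pt d))) ∈ Ps →
      rmin ≤ rIn d {m} ∧ rIn d {m} ≤ rOut d {m} ∧ rOut d {m} ≤ rmax
  extend : ∀ P ∈ Ps, (0 : Pt d) ∈ supp d P → ∀ r : ℝ, 0 < r →
    ∃ Q ∈ Ps, P ⊆ Q ∧ Metric.closedBall (0 : Pt d) r ⊆ supp d Q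

/-- Linear repetitivity of a (translation-closed) set of patterns. -/
def LinearlyRepetitive (Ps : Set (Set (Set (Pt d)))) : Prop :=
  ∃ c : ℝ, 0 < c ∧ ∀ P ∈ Ps, 1 ≤ rOut d P →
    ∀ Q ∈ Ps, c * rOut d P ≤ rIn d Q → SubpatternClass d P Q

/-- The box determined by corner functions `a b : Fin d → ℝ`. -/
def boxSet (a b : Fin d → ℝ) : Set (Pt d) := {x | ∀ j, x j ∈ Set.Icc (a j) (b j)}

/-- `B` is a box. -/
def IsBox (B : Set (Pt d)) : Prop :=
  ∃ a b : Fin d → ℝ, (∀ j, a j < b j) ∧ B = boxSet d a b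

/-- `B` is an `r`-box: all side lengths lie in `[r, 2r]`. -/
def IsRBox (r : ℝ) (B : Set (Pt d)) : Prop :=
  ∃ a b : Fin d → ℝ, (∀ j, a j < b j) ∧ B = boxSet d a b ∧
    ∀ j, r ≤ b j - a j ∧ b j - a j ≤ 2 * r

/-- Width of a box: the minimum of its side lengths. -/
def widthOf (B : Set (Pt d)) : ℝ :=
  ⨅ j : Fin d, (sSup ((fun x : Pt d => x j) '' B) - sInf ((fun x : Pt d => x j) '' B))

/-- Volume of a subset of `ℝ^d`. -/
def volOf (B : Set (Pt d)) : ℝ := (volume B).toReal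

/-- Restriction `M ∩ B` of a pattern or tiling `M` to `B`. -/
def patRestrict (M : Set (Set (Pt d))) (B : Set (Pt d)) : Set (Set (Pt d)) :=
  {s | ∃ m ∈ M, (m ∩ interior B).Nonempty ∧ s = m ∩ B}

/-- The set `Ps_B` of box-patterns derived from `Ps` (concrete representatives). -/
def BoxPatterns (Ps : Set (Set (Set (Pt d)))) : Set (Set (Set (Pt d))) :=
  {Q | ∃ P ∈ Ps, ∃ B : Set (Pt d), IsBox d B ∧ B ⊆ supp d P ∧ Q = patRestrict d P B}

/-- The set `Ps(r)` of `r`-patterns derived from `Ps`. -/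
def RPatterns (Ps : Set (Set (Set (Pt d)))) (r : ℝ) : Set (Set (Set (Pt d))) :=
  {Q | ∃ P ∈ Ps, ∃ B : Set (Pt d), IsRBox d r B ∧ B ⊆ supp d P ∧ Q = patRestrict d P B}

/-- Width of a box-pattern. -/
def patWidth (M : Set (Set (Pt d))) : ℝ := widthOf d (supp d M)

/-- Volume of a box-pattern. -/
def patVol (M : Set (Set (Pt d))) : ℝ := volOf d (supp d M)

/-- A subadditive function on `Ps_B`, with constants `dF, rF` and error function `cF`.
`F` is defined on concrete patterns and is translation-invariant (i.e. well defined on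
pattern classes). -/
structure SubadditiveOn (Ps : Set (Set (Set (Pt d)))) (F : Set (Set (Pt d)) → ℝ)
    (dF rF : ℝ) (cF : ℝ → ℝ) : Prop where
  invariant : ∀ (t : Pt d), ∀ M ∈ BoxPatterns d Ps, F (patTrans d t M) = F M
  dF_nonneg : 0 ≤ dF
  rF_nonneg : 0 ≤ rF
  cF_anti : ∀ r s : ℝ, rF ≤ r → r ≤ s → cF s ≤ cF r
  cF_lim : Tendsto cF atTop (nhds 0)
  subadd : ∀ M ∈ BoxPatterns d Ps, ∀ (n : ℕ) (Bj : Fin n → Set (Pt d)),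
    (∀ j, IsBox d (Bj j)) →
    (∀ i j, i ≠ j → interior (Bj i) ∩ interior (Bj j) = ∅) →
    (⋃ j, Bj j) = supp d M →
    (∀ j, rF ≤ widthOf d (Bj j)) →
    F M ≤ (∑ j, F (patRestrict d M (Bj j))) +
      ∑ j, cF (widthOf d (Bj j)) * volOf d (Bj j)
  bound : ∀ M ∈ BoxPatterns d Ps, |F M| ≤ dF * patVol d M

/-- The upper mean `F⁺(r)`. -/
def Fplus (Ps : Set (Set (Set (Pt d)))) (F : Set (Set (Pt d)) → ℝ) (r : ℝ) : ℝ :=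
  sSup ((fun P => F P / patVol d P) '' RPatterns d Ps r)

/-- The lower mean `F⁻(r)`. -/
def Fminus (Ps : Set (Set (Set (Pt d)))) (F : Set (Set (Pt d)) → ℝ) (r : ℝ) : ℝ :=
  sInf ((fun P => F P / patVol d P) '' RPatterns d Ps r)


/-- The tiling space `Ω(𝒫)`: all tilings all of whose finite subpattern classes lie in `Ps`. -/
def TilingsOf (Ps : Set (Set (Set (Pt d)))) : Set (Set (Set (Pt d))) :=
  {T | IsTiling d T ∧ ∀ M : Set (Set (Pt d)), IsPattern d M → M ⊆ T → M ∈ Ps}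

/-- The metric `d(T,S)` on the tiling space. -/
def tdist (T S : Set (Set (Pt d))) : ℝ :=
  sInf {ε : ℝ | 0 < ε ∧ ∃ t : Pt d, ‖t‖ ≤ ε ∧
    patRestrict d T (Metric.closedBall (0 : Pt d) (1 / ε)) =
      patRestrict d (patTrans d t S) (Metric.closedBall (0 : Pt d) (1 / ε))}

/-!
The tiles of a tiling `T` meeting the ball of radius `R` about the origin form a finite patch,
because tiles have uniformly bounded inner and outer radii. By linear repetitivity the patches of
radius `R` of all the `T n` occur, up to bounded translations, inside one fixed finite patch, so
along an ultrafilter they converge, up to translations tending to `0`, to a limit patch. A tile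
determines the translation carrying it into a finite pattern, so the limits for increasing radii
are nested; their union is a tiling of `Ω(𝒫)` to which the `T n` converge along the ultrafilter.
Since the ultrafilter is finer than the cofinite filter, a subsequence converges in the metric.
-/

variable {d}

section Translation

lemma patTrans_zero (M : Set (Set (Pt d))) : patTrans d 0 M = M := by
  simp [patTrans]

lemma patTrans_patTrans (s t : Pt d) (M : Set (Set (Pt d))) :
    patTrans d s (patTrans d t M) = patTrans d (t + s) M := by
  simp only [patTrans, Set.image_image, add_assoc]

lemma patTrans_mono (t : Pt d) {M N : Set (Set (Pt d))} (h : M ⊆ N) :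
    patTrans d t M ⊆ patTrans d t N :=
  Set.image_mono h

lemma patTrans_subset_iff {t : Pt d} {M N : Set (Set (Pt d))} :
    patTrans d t M ⊆ N ↔ M ⊆ patTrans d (-t) N := by
  constructor <;> intro h
  · simpa [patTrans_patTrans, patTrans_zero] using patTrans_mono (-t) h
  · simpa [patTrans_patTrans, patTrans_zero] using patTrans_mono t h

lemma supp_patTrans (t : Pt d) (M : Set (Set (Pt d))) :
    supp d (patTrans d t M) = (fun x => x + t) '' supp d M := by
  simp only [supp, patTrans, Set.sUnion_eq_biUnion, Set.biUnion_image, Set.image_iUnion₂]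

lemma IsTile.image_homeomorph {m : Set (Pt d)} (h : IsTile d m) (e : Pt d ≃ₜ Pt d) :
    IsTile d (e '' m) :=
  ⟨(e.image m).symm.trans h.some⟩

lemma IsTile.isCompact {m : Set (Pt d)} (h : IsTile d m) : IsCompact m :=
  isCompact_iff_compactSpace.mpr <|
    have := isCompact_iff_compactSpace.mp (isCompact_closedBall (0 : Pt d) 1)
    h.some.symm.compactSpace

lemma IsTile.nonempty {m : Set (Pt d)} (h : IsTile d m) : m.Nonempty :=
  Set.nonempty_coe_sort.mp ⟨h.some.symm ⟨0, mem_closedBall_self zero_le_one⟩⟩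

lemma pairwise_interior_patTrans (t : Pt d) {M : Set (Set (Pt d))}
    (h : M.Pairwise fun m m' => interior m ∩ interior m' = ∅) :
    (patTrans d t M).Pairwise fun m m' => interior m ∩ interior m' = ∅ := by
  rintro _ ⟨m, hm, rfl⟩ _ ⟨m', hm', rfl⟩ hne
  have himage (s : Set (Pt d)) : (fun x => x + t) '' s = Homeomorph.addRight t '' s := rfl
  dsimp only
  rw [himage, himage, ← (Homeomorph.addRight t).image_interior,
    ← (Homeomorph.addRight t).image_interior, ← Set.image_inter (Homeomorph.injective _),
    h hm hm' (fun h => hne (h ▸ rfl)), Set.image_empty]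

lemma IsPattern.patTrans {M : Set (Set (Pt d))} (h : IsPattern d M) (t : Pt d) :
    IsPattern d (patTrans d t M) :=
  ⟨h.1.image _, h.2.1.image _,
    by rintro _ ⟨m, hm, rfl⟩; exact (h.2.2.1 m hm).image_homeomorph (Homeomorph.addRight t),
    pairwise_interior_patTrans t h.2.2.2⟩

lemma IsTiling.patTrans {T : Set (Set (Pt d))} (h : IsTiling d T) (t : Pt d) :
    IsTiling d (patTrans d t T) := by
  refine ⟨?_, pairwise_interior_patTrans t h.2.1, ?_⟩
  · rintro _ ⟨m, hm, rfl⟩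
    exact (h.1 m hm).image_homeomorph (Homeomorph.addRight t)
  · change supp d _ = _
    rw [supp_patTrans, supp, h.2.2, Set.image_univ_of_surjective (add_right_surjective t)]

end Translation

section Radii

lemma exists_closedBall_subset_of_lt_rIn {M : Set (Set (Pt d))} {r : ℝ} (h : r < rIn d M) :
    ∃ x, closedBall x r ⊆ supp d M := by
  have hne : {r : ℝ | ∃ x : Pt d, closedBall x r ⊆ supp d M}.Nonempty :=
    ⟨-1, 0, by simp⟩
  obtain ⟨r', ⟨x, hx⟩, hr'⟩ := exists_lt_of_lt_csSup hne h
  exact ⟨x, (closedBall_subset_closedBall hr'.le).trans hx⟩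

lemma exists_subset_closedBall_of_rOut_lt {M : Set (Set (Pt d))} {r : ℝ}
    (hb : Bornology.IsBounded (supp d M)) (h : rOut d M < r) :
    ∃ x, supp d M ⊆ closedBall x r := by
  obtain ⟨R, hR⟩ := hb.subset_closedBall 0
  obtain ⟨r', ⟨x, hx⟩, hr'⟩ :=
    exists_lt_of_csInf_lt (s := {r | ∃ x, supp d M ⊆ closedBall x r}) ⟨R, 0, hR⟩ h
  exact ⟨x, hx.trans (closedBall_subset_closedBall hr'.le)⟩

lemma rOut_le_of_subset_closedBall {M : Set (Set (Pt d))} {x : Pt d} {R : ℝ}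
    (hne : (supp d M).Nonempty) (h : supp d M ⊆ closedBall x R) : rOut d M ≤ R := by
  refine csInf_le ⟨0, ?_⟩ ⟨x, h⟩
  rintro r ⟨y, hy⟩
  exact dist_nonneg.trans (mem_closedBall.mp (hy hne.some_mem))

lemma le_of_closedBall_subset_closedBall {E : Type*} [NormedAddCommGroup E] [NormedSpace ℝ E]
    [Nontrivial E] {x y : E} {r R : ℝ} (hr : 0 ≤ r) (h : closedBall x r ⊆ closedBall y R) :
    r ≤ R := by
  obtain ⟨v, hv⟩ := exists_norm_eq E hr
  have hmem (w : E) (hw : ‖w‖ = r) : dist (x + w) y ≤ R :=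
    h (by rw [mem_closedBall, dist_self_add_left, hw])
  have hdiam : dist (x + v) (x + -v) = 2 * r := by
    rw [dist_add_left, dist_eq_norm, sub_neg_eq_add, ← two_smul ℝ v, norm_smul, hv]
    norm_num
  linarith [dist_triangle_right (x + v) (x + -v) y, hmem v hv, hmem (-v) (by rw [norm_neg, hv])]

variable [Nontrivial (Pt d)]

lemma le_rIn_of_closedBall_subset {M : Set (Set (Pt d))} {x y : Pt d} {r R : ℝ} (hr : 0 ≤ r)
    (hin : closedBall x r ⊆ supp d M) (hout : supp d M ⊆ closedBall y R) : r ≤ rIn d M := by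
  refine le_csSup ⟨R, ?_⟩ ⟨x, hin⟩
  rintro r' ⟨x', hx'⟩
  rcases lt_or_ge r' 0 with hneg | hnonneg
  · linarith [dist_nonneg.trans (mem_closedBall.mp (hout (hin (mem_closedBall_self hr))))]
  · linarith [le_of_closedBall_subset_closedBall hnonneg (hx'.trans hout)]

lemma le_rOut_of_closedBall_subset {M : Set (Set (Pt d))} {x : Pt d} {r : ℝ} (hr : 0 ≤ r)
    (hb : Bornology.IsBounded (supp d M)) (hin : closedBall x r ⊆ supp d M) : r ≤ rOut d M := by
  obtain ⟨R, hR⟩ := hb.subset_closedBall 0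
  refine le_csInf ⟨R, 0, hR⟩ ?_
  rintro r' ⟨y, hy⟩
  exact le_of_closedBall_subset_closedBall hr (hin.trans hy)

end Radii

lemma Set.Finite.of_pairwise_interior_ball {X : Type*} [PseudoMetricSpace X] [ProperSpace X]
    {M : Set (Set X)} (hM : M.Pairwise fun m m' => interior m ∩ interior m' = ∅)
    {x₀ : X} {r R : ℝ} (hr : 0 < r)
    (hball : ∀ m ∈ M, ∃ z ∈ closedBall x₀ R, ball z r ⊆ interior m) : M.Finite := by
  have : Nonempty X := ⟨x₀⟩
  choose! z hz hzm using hball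
  obtain ⟨t, -, htfin, htcov⟩ :=
    finite_cover_balls_of_compact (isCompact_closedBall x₀ R) (half_pos hr)
  have hnear : ∀ m ∈ M, ∃ y ∈ t, z m ∈ ball y (r / 2) := fun m hm => by
    simpa using htcov (hz m hm)
  choose! f hft hf using hnear
  refine Set.Finite.of_finite_image (htfin.subset (Set.image_subset_iff.mpr hft)) ?_
  intro m hm m' hm' heq
  by_contra hne
  have hclose : z m' ∈ ball (z m) r := by
    have h₁ := hf m hm
    have h₂ := hf m' hm'
    rw [heq] at h₁
    rw [mem_ball] at h₁ h₂ ⊢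
    linarith [dist_triangle_right (z m') (z m) (f m')]
  exact (Set.eq_empty_iff_forall_notMem.mp (hM hm hm' hne)) (z m')
    ⟨hzm m hm hclose, hzm m' hm' (mem_ball_self hr)⟩

lemma subset_closedBall_of_inter_nonempty {X : Type*} [PseudoMetricSpace X] {s : Set X}
    {x y : X} {R D : ℝ} (hs : s ⊆ closedBall y D) (hmeet : (s ∩ closedBall x R).Nonempty) :
    s ⊆ closedBall x (R + 2 * D) := by
  obtain ⟨p, hps, hpx⟩ := hmeet
  intro q hq
  rw [mem_closedBall] at hpx ⊢
  linarith [dist_triangle q p x, dist_triangle_right q p y, mem_closedBall.mp (hs hq),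
    mem_closedBall.mp (hs hps)]

section Patches

def TileRadiiBounded (r D : ℝ) (T : Set (Set (Pt d))) : Prop :=
  ∀ m ∈ T, (∃ z, ball z r ⊆ interior m) ∧ ∃ y, m ⊆ closedBall y D

def patch (T : Set (Set (Pt d))) (R : ℝ) : Set (Set (Pt d)) :=
  {m | m ∈ T ∧ (m ∩ closedBall 0 R).Nonempty}

variable {T : Set (Set (Pt d))} {r D R : ℝ}

lemma patch_subset (T : Set (Set (Pt d))) (R : ℝ) : patch T R ⊆ T := fun _ hm => hm.1

lemma patch_mono (T : Set (Set (Pt d))) {R R' : ℝ} (h : R ≤ R') : patch T R ⊆ patch T R' :=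
  fun _ ⟨hm, hmeet⟩ => ⟨hm, hmeet.mono (Set.inter_subset_inter_right _
    (closedBall_subset_closedBall h))⟩

lemma IsTiling.closedBall_subset_supp_patch (hT : IsTiling d T) (R : ℝ) :
    closedBall 0 R ⊆ supp d (patch T R) := by
  intro x hx
  obtain ⟨m, hm, hxm⟩ := Set.mem_sUnion.mp (hT.2.2.symm ▸ Set.mem_univ x)
  exact ⟨m, ⟨hm, x, hxm, hx⟩, hxm⟩

lemma TileRadiiBounded.supp_patch_subset (hT : TileRadiiBounded r D T) :
    supp d (patch T R) ⊆ closedBall 0 (R + 2 * D) := by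
  rintro x ⟨m, ⟨hm, hmeet⟩, hxm⟩
  obtain ⟨y, hy⟩ := (hT m hm).2
  exact subset_closedBall_of_inter_nonempty hy hmeet hxm

lemma IsTiling.isPattern_patch (hT : IsTiling d T) (hrad : TileRadiiBounded r D T) (hr : 0 < r)
    (hR : 0 ≤ R) : IsPattern d (patch T R) := by
  refine ⟨?_, ?_, fun m hm => hT.1 m hm.1, hT.2.1.mono (patch_subset T R)⟩
  · refine Set.Finite.of_pairwise_interior_ball (hT.2.1.mono (patch_subset T R)) hr
      (x₀ := 0) (R := R + 2 * D) fun m hm => ?_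
    obtain ⟨z, hz⟩ := (hrad m hm.1).1
    refine ⟨z, hrad.supp_patch_subset ⟨m, hm, ?_⟩, hz⟩
    exact interior_subset (hz (mem_ball_self hr))
  · obtain ⟨m, hm, -⟩ := hT.closedBall_subset_supp_patch R (mem_closedBall_self hR)
    exact ⟨m, hm⟩

lemma TileRadiiBounded.interior_nonempty (h : TileRadiiBounded r D T) (hr : 0 < r) :
    ∀ m ∈ T, (interior m).Nonempty := fun m hm =>
  let ⟨z, hz⟩ := (h m hm).1
  ⟨z, hz (mem_ball_self hr)⟩

end Patches

section Admissible

variable {Ps : Set (Set (Set (Pt d)))}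

lemma isPattern_singleton {m : Set (Pt d)} (h : IsTile d m) : IsPattern d {m} :=
  ⟨Set.finite_singleton m, Set.singleton_nonempty m, by simpa using h,
    Set.pairwise_singleton _ _⟩

lemma singleton_mem_of_mem_tilingsOf {T : Set (Set (Pt d))} (hT : T ∈ TilingsOf d Ps)
    {m : Set (Pt d)} (hm : m ∈ T) : {m} ∈ Ps :=
  hT.2 _ (isPattern_singleton (hT.1.1 m hm)) (Set.singleton_subset_iff.mpr hm)

lemma supp_singleton (m : Set (Pt d)) : supp d {m} = m := Set.sUnion_singleton m

lemma Admissible.nontrivial (hadm : Admissible d Ps) {m : Set (Pt d)} (hm : {m} ∈ Ps) :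
    Nontrivial (Pt d) := by
  by_contra htriv
  have : Subsingleton (Pt d) := not_nontrivial_iff_subsingleton.mp htriv
  obtain ⟨rmin, _, hrmin, -, hbounds⟩ := hadm.tileBounds
  obtain ⟨x, hx⟩ := ((hadm.pattern _ hm).2.2.1 m rfl).nonempty
  have hfull : {r : ℝ | ∃ x : Pt d, closedBall x r ⊆ supp d {m}} = Set.univ :=
    Set.eq_univ_of_forall fun r =>
      ⟨x, fun y _ => by rwa [Subsingleton.elim y x, supp_singleton]⟩
  have := (hbounds m hm).1
  -- `sSup` of the unbounded set `univ` is the junk value `0`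
  rw [rIn, hfull, Real.sSup_univ] at this
  linarith

lemma Admissible.exists_tileRadiiBounded (hadm : Admissible d Ps) :
    ∃ r D : ℝ, 0 < r ∧ 0 ≤ D ∧ ∀ T ∈ TilingsOf d Ps, TileRadiiBounded r D T := by
  obtain ⟨rmin, rmax, hrmin, hminmax, hbounds⟩ := hadm.tileBounds
  refine ⟨rmin / 2, rmax + 1, by positivity, by linarith, fun T hT m hm => ⟨?_, ?_⟩⟩
  all_goals replace hm := singleton_mem_of_mem_tilingsOf hT hm
  · obtain ⟨z, hz⟩ := exists_closedBall_subset_of_lt_rIn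
      ((half_lt_self hrmin).trans_le (hbounds m hm).1)
    rw [supp_singleton] at hz
    exact ⟨z, interior_maximal (ball_subset_closedBall.trans hz) isOpen_ball⟩
  · have hcpt := ((hadm.pattern _ hm).2.2.1 m rfl).isCompact
    rw [← supp_singleton m] at hcpt ⊢
    exact exists_subset_closedBall_of_rOut_lt hcpt.isBounded
      (((hbounds m hm).2.2).trans_lt (lt_add_one rmax))

lemma Admissible.mem_of_subset_patTrans (hadm : Admissible d Ps) {T : Set (Set (Pt d))}
    (hT : T ∈ TilingsOf d Ps) {M : Set (Set (Pt d))} (hM : IsPattern d M) {t : Pt d}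
    (h : M ⊆ patTrans d t T) : M ∈ Ps := by
  have hmem := hadm.transClosed t _
    (hT.2 _ (hM.patTrans (-t)) (patTrans_subset_iff.mpr (by rwa [neg_neg])))
  rwa [patTrans_patTrans, neg_add_cancel, patTrans_zero] at hmem

lemma Admissible.patTrans_mem_tilingsOf (hadm : Admissible d Ps) {T : Set (Set (Pt d))}
    (hT : T ∈ TilingsOf d Ps) (t : Pt d) : patTrans d t T ∈ TilingsOf d Ps :=
  ⟨hT.1.patTrans t, fun _ hM h => hadm.mem_of_subset_patTrans hT hM h⟩

lemma iUnion_mem_tilingsOf {L : ℕ → Set (Set (Pt d))} (hmono : Monotone L)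
    (hpat : ∀ k, IsPattern d (L k)) (hcover : ∀ x, ∃ k, x ∈ supp d (L k))
    (hPs : ∀ k, ∀ M, IsPattern d M → M ⊆ L k → M ∈ Ps) :
    ⋃ k, L k ∈ TilingsOf d Ps := by
  refine ⟨⟨fun m hm => ?_, fun a ha b hb hab => ?_, ?_⟩, fun M hM hMS => ?_⟩
  · obtain ⟨k, hk⟩ := Set.mem_iUnion.mp hm
    exact (hpat k).2.2.1 m hk
  · obtain ⟨i, hi⟩ := Set.mem_iUnion.mp ha
    obtain ⟨j, hj⟩ := Set.mem_iUnion.mp hb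
    exact (hpat (max i j)).2.2.2 (hmono (le_max_left i j) hi) (hmono (le_max_right i j) hj) hab
  · refine Set.eq_univ_of_forall fun x => ?_
    obtain ⟨k, m, hm, hx⟩ := hcover x
    exact ⟨m, Set.mem_iUnion.mpr ⟨k, hm⟩, hx⟩
  · obtain ⟨k, hk⟩ := hmono.directed_le.exists_mem_subset_of_finset_subset_biUnion
      (s := hM.1.toFinset) (by simpa using hMS)
    exact hPs k M hM (by simpa using hk)

end Admissible

section Restriction

variable {X Y : Set (Set (Pt d))}

lemma IsTiling.countable (hX : IsTiling d X) (hint : ∀ m ∈ X, (interior m).Nonempty) :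
    X.Countable :=
  Set.PairwiseDisjoint.countable_of_isOpen
    (fun _ hm _ hm' hne => Set.disjoint_iff_inter_eq_empty.mpr (hX.2.1 hm hm' hne))
    (fun _ _ => isOpen_interior) hint

lemma IsTiling.exists_inter_interior_nonempty (hX : IsTiling d X)
    (hint : ∀ m ∈ X, (interior m).Nonempty) {U : Set (Pt d)} (hU : IsOpen U)
    (hne : U.Nonempty) : ∃ m ∈ X, (U ∩ interior m).Nonempty := by
  have hdense := dense_sUnion_interior_of_closed (fun m hm => (hX.1 m hm).isCompact.isClosed)
    (hX.countable hint) hX.2.2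
  obtain ⟨x, hxU, hx⟩ := hdense.inter_open_nonempty U hU hne
  obtain ⟨m, hm, hxm⟩ := Set.mem_iUnion₂.mp hx
  exact ⟨m, hm, x, hxU, hxm⟩

lemma patRestrict_eq_of_patch_subset (hX : IsTiling d X)
    (hXint : ∀ m ∈ X, (interior m).Nonempty)
    (hY : Y.Pairwise fun s s' => interior s ∩ interior s' = ∅)
    (hYint : ∀ s ∈ Y, (interior s).Nonempty) {D ρ R : ℝ} (hD : 0 ≤ D)
    (hYD : ∀ s ∈ Y, ∃ y, s ⊆ closedBall y D) (hR : ρ + 2 * D ≤ R)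
    (hsub : patch X R ⊆ Y) :
    patRestrict d X (closedBall 0 ρ) = patRestrict d Y (closedBall 0 ρ) := by
  ext s
  constructor
  · rintro ⟨m, hm, hmeet, rfl⟩
    refine ⟨m, hsub ⟨hm, hmeet.mono (Set.inter_subset_inter_right _ ?_)⟩, hmeet, rfl⟩
    exact interior_subset.trans (closedBall_subset_closedBall (by linarith))
  · rintro ⟨s, hs, hmeet, rfl⟩
    obtain ⟨y, hy⟩ := hYD s hs
    have hsR : s ⊆ closedBall 0 R := (subset_closedBall_of_inter_nonempty hy
      (hmeet.mono (Set.inter_subset_inter_right _ interior_subset))).trans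
        (closedBall_subset_closedBall hR)
    -- Baire: `interior s` meets the interior of a tile `m` of `X`; then `m ∈ Y`, so `m = s`
    obtain ⟨m, hm, hsm⟩ := hX.exists_inter_interior_nonempty hXint isOpen_interior (hYint s hs)
    have hmY : m ∈ Y := hsub ⟨hm, hsm.mono fun x hx =>
      ⟨interior_subset hx.2, hsR (interior_subset hx.1)⟩⟩
    obtain rfl : s = m := by
      by_contra hne
      exact hsm.ne_empty (hY hs hmY hne)
    exact ⟨s, hm, hmeet, rfl⟩

lemma tdist_nonneg (T S : Set (Set (Pt d))) : 0 ≤ tdist d T S :=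
  Real.sInf_nonneg fun _ h => h.1.le

lemma tdist_le_of_patRestrict_eq {T S : Set (Set (Pt d))} {ε : ℝ} {t : Pt d} (hε : 0 < ε)
    (ht : ‖t‖ ≤ ε) (h : patRestrict d T (closedBall 0 (1 / ε)) =
      patRestrict d (patTrans d t S) (closedBall 0 (1 / ε))) :
    tdist d T S ≤ ε :=
  csInf_le ⟨0, fun _ h => h.1.le⟩ ⟨hε, t, ht, h⟩

lemma tdist_le_of_patch_subset {S : Set (Set (Pt d))} {r D ε R : ℝ} {t : Pt d} (hr : 0 < r)
    (hD : 0 ≤ D) (hX : IsTiling d X) (hXrad : TileRadiiBounded r D X) (hS : IsTiling d S)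
    (hSrad : TileRadiiBounded r D (patTrans d t S)) (hε : 0 < ε) (ht : ‖t‖ ≤ ε)
    (hR : 1 / ε + 2 * D ≤ R) (hsub : patch X R ⊆ patTrans d t S) : tdist d X S ≤ ε :=
  tdist_le_of_patRestrict_eq hε ht <|
    patRestrict_eq_of_patch_subset hX (hXrad.interior_nonempty hr)
      (pairwise_interior_patTrans t hS.2.1) (hSrad.interior_nonempty hr) hD
      (fun s hs => (hSrad s hs).2) hR hsub

end Restriction

lemma eq_zero_of_mapsTo_add_right {E : Type*} [NormedAddCommGroup E] [InnerProductSpace ℝ E]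
    {m : Set E} (hm : IsCompact m) (hne : m.Nonempty) {w : E} (h : Set.MapsTo (· + w) m m) :
    w = 0 := by
  obtain ⟨x, hx, hmax⟩ := hm.exists_isMaxOn hne (f := fun y => inner ℝ w y) (by fun_prop)
  have hle : inner ℝ w (x + w) ≤ inner ℝ w x := hmax (h hx)
  rw [inner_add_right] at hle
  exact inner_self_eq_zero.mp (le_antisymm (by linarith) real_inner_self_nonneg)

lemma IsCompact.injective_image_add_right {E : Type*} [NormedAddCommGroup E]
    [InnerProductSpace ℝ E] {m : Set E} (hm : IsCompact m) (hne : m.Nonempty) :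
    Function.Injective fun w : E => (· + w) '' m := by
  intro w w' h
  refine sub_eq_zero.mp (eq_zero_of_mapsTo_add_right hm hne fun x hx => ?_)
  obtain ⟨y, hy, hxy⟩ : x + w ∈ (· + w') '' m := by
    simp only at h
    exact h ▸ Set.mem_image_of_mem _ hx
  change x + (w - w') ∈ m
  rwa [show x + (w - w') = y by rw [← add_sub_assoc, ← hxy, add_sub_cancel_right]]

lemma Filter.Tendsto.eventually_eq_of_finite {ι X : Type*} [TopologicalSpace X] [T1Space X]
    {l : Filter ι} {f : ι → X} {x : X} (hf : Tendsto f l (𝓝 x)) {V : Set X} (hV : V.Finite)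
    (hmem : ∀ᶠ n in l, f n ∈ V) : ∀ᶠ n in l, f n = x := by
  have hnhds : (V \ {x})ᶜ ∈ 𝓝 x :=
    (hV.sdiff).isClosed.isOpen_compl.mem_nhds fun hx => hx.2 rfl
  filter_upwards [hmem, hf hnhds] with n hV hx
  by_contra hne
  exact hx ⟨hV, hne⟩

section TendstoModTranslation

variable {ι : Type*}

def TendstoModTranslation (l : Filter ι) (P : ι → Set (Set (Pt d))) (L : Set (Set (Pt d))) :
    Prop :=
  ∃ s : ι → Pt d, Tendsto s l (𝓝 0) ∧ ∀ᶠ n in l, P n = patTrans d (s n) L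

variable {l : Filter ι} {P P' : ι → Set (Set (Pt d))} {L L' : Set (Set (Pt d))}

lemma TendstoModTranslation.eventually_exists (h : TendstoModTranslation l P L) {ε : ℝ}
    (hε : 0 < ε) : ∀ᶠ n in l, ∃ t : Pt d, ‖t‖ < ε ∧ P n = patTrans d t L := by
  obtain ⟨s, hs, hP⟩ := h
  filter_upwards [hP, hs (ball_mem_nhds 0 hε)] with n hn hsn
  exact ⟨s n, by simpa using hsn, hn⟩

lemma TendstoModTranslation.exists_eq_patTrans [l.NeBot] (h : TendstoModTranslation l P L) :
    ∃ n, ∃ t : Pt d, L = patTrans d t (P n) := by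
  obtain ⟨n, t, -, hn⟩ := (h.eventually_exists one_pos).exists
  exact ⟨n, -t, by rw [hn, patTrans_patTrans, add_neg_cancel, patTrans_zero]⟩

lemma TendstoModTranslation.closedBall_subset_supp [l.NeBot] (h : TendstoModTranslation l P L)
    {R : ℝ} (hP : ∀ n, closedBall 0 R ⊆ supp d (P n)) :
    closedBall 0 (R - 1) ⊆ supp d L := by
  obtain ⟨n, t, ht, hn⟩ := (h.eventually_exists one_pos).exists
  intro x hx
  have hxt : x + t ∈ supp d (P n) := by
    refine hP n (mem_closedBall_zero_iff.mpr ?_)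
    linarith [norm_add_le x t, mem_closedBall_zero_iff.mp hx]
  rw [hn, supp_patTrans] at hxt
  obtain ⟨y, hy, hyx⟩ := hxt
  rwa [add_right_cancel hyx] at hy

lemma TendstoModTranslation.subset [l.NeBot] (hP : TendstoModTranslation l P L)
    (hP' : TendstoModTranslation l P' L') (h : ∀ n, P n ⊆ P' n) (hL : ∀ m ∈ L, IsTile d m)
    (hL' : L'.Finite) : L ⊆ L' := by
  obtain ⟨s, hs, hPs⟩ := hP
  obtain ⟨s', hs', hPs'⟩ := hP'
  have hshift : ∀ᶠ n in l, patTrans d (s n - s' n) L ⊆ L' := by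
    filter_upwards [hPs, hPs'] with n hn hn'
    have := patTrans_mono (-s' n) (hn ▸ hn' ▸ h n)
    rwa [patTrans_patTrans, patTrans_patTrans, add_neg_cancel, patTrans_zero,
      ← sub_eq_add_neg] at this
  intro m hm
  -- `m` determines the translation carrying it into the finite `L'`, so `s n - s' n` ranges
  -- over a finite set; since it tends to `0`, it is eventually `0`
  have hinj := (hL m hm).isCompact.injective_image_add_right (hL m hm).nonempty
  have hzero : ∀ᶠ n in l, s n - s' n = 0 := by
    have hlim : Tendsto (fun n => s n - s' n) l (𝓝 0) := by simpa using hs.sub hs'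
    refine hlim.eventually_eq_of_finite (hL'.preimage hinj.injOn) ?_
    filter_upwards [hshift] with n hn
    exact hn (Set.mem_image_of_mem _ hm)
  obtain ⟨n, hn0, hn⟩ := (hzero.and hshift).exists
  rw [hn0, patTrans_zero] at hn
  exact hn hm

lemma Ultrafilter.exists_tendstoModTranslation (U : Ultrafilter ι) {Q : Set (Set (Pt d))}
    (hQ : Q.Finite) {u : ι → Pt d} {R : ℝ} (hsub : ∀ n, patTrans d (u n) (P n) ⊆ Q)
    (hu : ∀ n, u n ∈ closedBall 0 R) : ∃ L, TendstoModTranslation U P L := by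
  obtain ⟨C, -, hC⟩ := (Ultrafilter.eventually_exists_mem_iff hQ.finite_subsets).mp
    (Eventually.of_forall fun n => ⟨_, hsub n, rfl⟩ :
      ∀ᶠ n in (U : Filter ι), ∃ C ∈ {C | C ⊆ Q}, patTrans d (u n) (P n) = C)
  obtain ⟨τ, -, hτ⟩ := (isCompact_closedBall (0 : Pt d) R).ultrafilter_le_nhds' (U.map u)
    (Ultrafilter.mem_map.mpr (Filter.univ_mem' hu))
  refine ⟨patTrans d (-τ) C, fun n => τ - u n,
    by simpa using (tendsto_const_nhds (x := τ)).sub hτ, ?_⟩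
  filter_upwards [hC] with n hn
  rw [← hn, patTrans_patTrans, patTrans_patTrans, show u n + (-τ + (τ - u n)) = 0 by abel,
    patTrans_zero]

end TendstoModTranslation

section Limit

variable {Ps : Set (Set (Set (Pt d)))}

lemma LinearlyRepetitive.exists_patTrans_subset [Nontrivial (Pt d)]
    (hlr : LinearlyRepetitive d Ps) :
    ∃ c > 0, ∀ P ∈ Ps, ∀ Q ∈ Ps, ∀ {x y z : Pt d} {R R' : ℝ}, 1 ≤ R →
      closedBall x R ⊆ supp d P → supp d P ⊆ closedBall y R' →
      closedBall z (c * R') ⊆ supp d Q → Bornology.IsBounded (supp d Q) →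
      ∃ u, patTrans d u P ⊆ Q := by
  obtain ⟨c, hc, hocc⟩ := hlr
  refine ⟨c, hc, fun P hP Q hQ x y z R R' hR hPin hPout hQin hQb => hocc P hP ?_ Q hQ ?_⟩
  · exact hR.trans (le_rOut_of_closedBall_subset (by linarith)
      ((Metric.isBounded_closedBall).subset hPout) hPin)
  · have hRR' : R ≤ R' := le_of_closedBall_subset_closedBall (by linarith) (hPin.trans hPout)
    obtain ⟨w, hw⟩ := hQb.subset_closedBall 0
    calc c * rOut d P ≤ c * R' := by
          gcongr
          exact rOut_le_of_subset_closedBall ⟨x, hPin (mem_closedBall_self (by linarith))⟩ hPout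
      _ ≤ rIn d Q := le_rIn_of_closedBall_subset (by nlinarith) hQin hw

lemma mem_closedBall_of_patTrans_subset {P Q : Set (Set (Pt d))} {u : Pt d} {R : ℝ}
    (h0 : 0 ∈ supp d P) (h : patTrans d u P ⊆ Q) (hQ : supp d Q ⊆ closedBall 0 R) :
    u ∈ closedBall 0 R :=
  hQ <| Set.sUnion_mono h <| by
    change u ∈ supp d (patTrans d u P)
    rw [supp_patTrans]
    exact ⟨0, h0, zero_add u⟩

variable {ι : Type*}

lemma exists_tendstoModTranslation_patch (hadm : Admissible d Ps)
    (hlr : LinearlyRepetitive d Ps) (U : Ultrafilter ι) {T : ι → Set (Set (Pt d))}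
    (hT : ∀ n, T n ∈ TilingsOf d Ps) {R : ℝ} (hR : 1 ≤ R) :
    ∃ L, TendstoModTranslation U (fun n => patch (T n) R) L := by
  obtain ⟨r, D, hr, hD, hrad⟩ := hadm.exists_tileRadiiBounded
  obtain ⟨i₀⟩ := Filter.nonempty_of_neBot (U : Filter ι)
  obtain ⟨m, hm, -⟩ := Set.mem_sUnion.mp ((hT i₀).1.2.2.symm ▸ Set.mem_univ (0 : Pt d))
  have := hadm.nontrivial (singleton_mem_of_mem_tilingsOf (hT i₀) hm)
  obtain ⟨c, hc, hocc⟩ := hlr.exists_patTrans_subset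
  have hpat (n : ι) {R' : ℝ} (hR' : 0 ≤ R') : IsPattern d (patch (T n) R') :=
    (hT n).1.isPattern_patch (hrad _ (hT n)) hr hR'
  have hmem (n : ι) {R' : ℝ} (hR' : 0 ≤ R') : patch (T n) R' ∈ Ps :=
    (hT n).2 _ (hpat n hR') (patch_subset _ _)
  have hcR : 0 ≤ c * (R + 2 * D) := by positivity
  have hocc' (n : ι) : ∃ u, patTrans d u (patch (T n) R) ⊆ patch (T i₀) (c * (R + 2 * D)) :=
    hocc _ (hmem n (by linarith)) _ (hmem i₀ hcR) hR ((hT n).1.closedBall_subset_supp_patch R)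
      (hrad _ (hT n)).supp_patch_subset ((hT i₀).1.closedBall_subset_supp_patch _)
      (isBounded_closedBall.subset (hrad _ (hT i₀)).supp_patch_subset)
  choose u hu using hocc'
  exact U.exists_tendstoModTranslation (hpat i₀ hcR).1 hu fun n =>
    mem_closedBall_of_patTrans_subset ((hT n).1.closedBall_subset_supp_patch R
      (mem_closedBall_self (by linarith))) (hu n) (hrad _ (hT i₀)).supp_patch_subset

theorem Admissible.exists_tendsto_tdist (hadm : Admissible d Ps) (hlr : LinearlyRepetitive d Ps)
    (U : Ultrafilter ι) {T : ι → Set (Set (Pt d))} (hT : ∀ n, T n ∈ TilingsOf d Ps) :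
    ∃ S ∈ TilingsOf d Ps, Tendsto (fun n => tdist d (T n) S) U (𝓝 0) := by
  obtain ⟨r, D, hr, hD, hrad⟩ := hadm.exists_tileRadiiBounded
  choose L hL using fun k : ℕ =>
    exists_tendstoModTranslation_patch hadm hlr U hT (R := k + 1) (by simp)
  have hsource (k : ℕ) := (hL k).exists_eq_patTrans
  have hpat (k : ℕ) : IsPattern d (L k) := by
    obtain ⟨n, t, hn⟩ := hsource k
    exact hn ▸ ((hT n).1.isPattern_patch (hrad _ (hT n)) hr (by positivity)).patTrans t
  have hmono : Monotone L := monotone_nat_of_le_succ fun k =>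
    (hL k).subset (hL (k + 1)) (fun n => patch_mono _ (by simp)) (hpat k).2.2.1 (hpat (k + 1)).1
  have hcover (x : Pt d) : ∃ k, x ∈ supp d (L k) := by
    obtain ⟨k, hk⟩ := exists_nat_ge ‖x‖
    refine ⟨k, (hL k).closedBall_subset_supp (fun n => (hT n).1.closedBall_subset_supp_patch _)
      (by simpa using hk)⟩
  have hS : ⋃ k, L k ∈ TilingsOf d Ps := iUnion_mem_tilingsOf hmono hpat hcover
    fun k M hM hMk => by
      obtain ⟨n, t, hn⟩ := hsource k
      rw [hn] at hMk
      exact hadm.mem_of_subset_patTrans (hT n) hM (hMk.trans (patTrans_mono t (patch_subset _ _)))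
  refine ⟨_, hS, tendsto_order.2 ⟨fun a ha => Eventually.of_forall fun n =>
    ha.trans_le (tdist_nonneg _ _), fun ε hε => ?_⟩⟩
  obtain ⟨k, hk⟩ := exists_nat_ge (1 / (ε / 2) + 2 * D)
  filter_upwards [(hL k).eventually_exists (half_pos hε)] with n ⟨t, ht, hn⟩
  refine (tdist_le_of_patch_subset hr hD (hT n).1 (hrad _ (hT n)) hS.1
    (hrad _ (hadm.patTrans_mem_tilingsOf hS t)) (half_pos hε) ht.le (by linarith)
    (hn ▸ patTrans_mono t (Set.subset_iUnion L k))).trans_lt (half_lt_self hε)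

end Limit

/-- Proposition 2.4. If `Ps` is admissible and linearly repetitive, then
`Ω(Ps)` is compact with respect to the metric `d`; for a metric space this is equivalent to
sequential compactness: every sequence of tilings in `Ω(Ps)` has a subsequence converging
(in the metric `d`) to a tiling in `Ω(Ps)`. -/
theorem omega_compact (d : ℕ) (Ps : Set (Set (Set (Pt d))))
    (hadm : Admissible d Ps) (hlr : LinearlyRepetitive d Ps) :
    ∀ T : ℕ → Set (Set (Pt d)), (∀ n, T n ∈ TilingsOf d Ps) →
      ∃ S ∈ TilingsOf d Ps, ∃ φ : ℕ → ℕ, StrictMono φ ∧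
        Tendsto (fun n => tdist d (T (φ n)) S) atTop (nhds 0) := by
  intro T hT
  obtain ⟨S, hS, hlim⟩ := hadm.exists_tendsto_tdist hlr (hyperfilter ℕ) hT
  obtain ⟨φ, hφ, hφlim⟩ := (hlim.mapClusterPt.mono Nat.hyperfilter_le_atTop).tendsto_subseq
  exact ⟨S, hS, φ, hφ, hφlim⟩
end
end

section
/- Let (a_n)_{n≥1} be a bounded sequence of positive integers (the continued fraction coefficients of an irrational α ∈ (0,1) with bounded continued fraction expansion) and let 𝒲 be the associated set of Sturmian words. Then for every subadditive function F : 𝒲 → ℝ there exists L ∈ ℝ such that for every sequence (w_n) in 𝒲 with |w_n| → ∞, the limit lim_{n→∞} F(w_n)/|w_n| exists and equals L (in particular it is independent of the sequence). -/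
open Filter

noncomputable section

/-- `k`-fold concatenation of a word. -/
def wpow (w : List Bool) : ℕ → List Bool
  | 0 => []
  | n + 1 => w ++ wpow w n

/-- The standard Sturmian words `s_{-1}, s_0, s_1, s_2, …` associated to a sequence
`(a_n)_{n ≥ 1}` of positive integers (the continued fraction coefficients):
`st a 0 = s_{-1} = 1`, `st a 1 = s_0 = 0`, `st a 2 = s_1 = s_0^{a_1 - 1} s_{-1}` and
`st a (n+1) = s_n = s_{n-1}^{a_n} s_{n-2}` for `n ≥ 2` (`false` plays the role of the
letter `0` and `true` of the letter `1`). -/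
def st (a : ℕ → ℕ) : ℕ → List Bool
  | 0 => [true]
  | 1 => [false]
  | 2 => wpow [false] (a 1 - 1) ++ [true]
  | n + 3 => wpow (st a (n + 2)) (a (n + 2)) ++ st a (n + 1)

/-- The set `𝒲` of Sturmian words: all subwords of some `s_n`, `n ≥ 0`. -/
def sturmW (a : ℕ → ℕ) : Set (List Bool) :=
  {w | ∃ n : ℕ, 1 ≤ n ∧ w <:+: st a n}

/-- A subadditive function on a set of words: `F(uv) ≤ F(u) + F(v)` whenever `u`, `v`
and `uv` all belong to `W`, together with a linear bound `|F(w)| ≤ d·|w|`. -/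
def WordSubadditive (W : Set (List Bool)) (F : List Bool → ℝ) : Prop :=
  (∀ u v : List Bool, u ∈ W → v ∈ W → u ++ v ∈ W → F (u ++ v) ≤ F u + F v) ∧
    ∃ dd : ℝ, 0 ≤ dd ∧ ∀ w ∈ W, |F w| ≤ dd * w.length

/-- Number of occurrences of `v` as a subword of `w`: the number of indices
`0 ≤ i ≤ |w| - |v|` with `v = w_{i+1} ⋯ w_{i+|v|}`. -/
def occ (v w : List Bool) : ℕ :=
  ((Finset.range (w.length + 1 - v.length)).filter
    fun i => (w.drop i).take v.length = v).card

/-- The superadditive weight `G(w) = Σ_{n ≥ 1} #_{s_{n-1} s_n}(w) · (|s_{n-1}| + |s_n|)`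
(all but finitely many terms vanish). -/
def Gfun (a : ℕ → ℕ) (w : List Bool) : ℝ :=
  ∑' n : ℕ, (occ (st a (n + 1) ++ st a (n + 2)) w : ℝ) *
    (((st a (n + 1)).length : ℝ) + ((st a (n + 2)).length : ℝ))


namespace SturmAux

theorem wpow_zero (w : List Bool) : wpow w 0 = [] := rfl
theorem wpow_succ (w : List Bool) (k : ℕ) : wpow w (k+1) = w ++ wpow w k := rfl

theorem wpow_add (w : List Bool) (j k : ℕ) : wpow w (j + k) = wpow w j ++ wpow w k := by
  induction j with
  | zero => simp [wpow_zero]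
  | succ j ih => rw [Nat.succ_add, wpow_succ, wpow_succ, ih, List.append_assoc]

theorem wpow_succ' (w : List Bool) (k : ℕ) : wpow w (k+1) = wpow w k ++ w := by
  have h := wpow_add w k 1
  simpa [wpow_succ, wpow_zero] using h

theorem wpow_length (w : List Bool) (k : ℕ) : (wpow w k).length = k * w.length := by
  induction k with
  | zero => simp [wpow_zero]
  | succ k ih => rw [wpow_succ]; simp [ih]; ring

theorem st_eq3 (a : ℕ → ℕ) (n : ℕ) :
    st a (n+3) = wpow (st a (n + 2)) (a (n + 2)) ++ st a (n + 1) := by rw [st]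

/-- length of st -/
def qq (a : ℕ → ℕ) (n : ℕ) : ℕ := (st a n).length

variable {a : ℕ → ℕ}

theorem qq0 : qq a 0 = 1 := rfl
theorem qq1 : qq a 1 = 1 := rfl
theorem qq2 (ha : ∀ n, 1 ≤ a n) : qq a 2 = a 1 := by
  have h1 := ha 1
  simp [qq, st, wpow_length]
  omega

theorem qq_rec (n : ℕ) : qq a (n+3) = a (n+2) * qq a (n+2) + qq a (n+1) := by
  simp [qq, st_eq3, wpow_length]

theorem qq_pos (ha : ∀ n, 1 ≤ a n) : ∀ n, 0 < qq a n
  | 0 => one_pos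
  | 1 => one_pos
  | 2 => by rw [qq2 ha]; exact ha 1
  | n+3 => by
      have h1 := qq_pos ha (n+1)
      rw [qq_rec]; omega

theorem qq_mono_succ (ha : ∀ n, 1 ≤ a n) : ∀ n, qq a n ≤ qq a (n+1)
  | 0 => le_refl _
  | 1 => by rw [qq2 ha]; exact ha 1
  | n+2 => by
      have h1 := ha (n+2)
      have h2 := qq_pos ha (n+2)
      rw [qq_rec]
      nlinarith

theorem qq_mono (ha : ∀ n, 1 ≤ a n) {n m : ℕ} (h : n ≤ m) : qq a n ≤ qq a m := by
  induction m with
  | zero => simp_all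
  | succ m ih =>
    rcases Nat.lt_or_ge n (m+1) with h' | h'
    · exact le_trans (ih (by omega)) (qq_mono_succ ha m)
    · have : n = m + 1 := by omega
      subst this; exact le_refl _

theorem qq_ge (ha : ∀ n, 1 ≤ a n) : ∀ n, n ≤ qq a (n+1)
  | 0 => by simp
  | 1 => by rw [qq2 ha]; exact ha 1
  | n+2 => by
      have h1 := qq_ge ha (n+1)
      have h2 := qq_pos ha (n+1)
      have h3 := ha (n+2)
      have h4 := qq_pos ha (n+2)
      rw [qq_rec]
      nlinarith

theorem qq_growth {C : ℕ} (ha : ∀ n, 1 ≤ a n) (hC : ∀ n, a n ≤ C) :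
    ∀ n, qq a (n+1) ≤ (C+1) * qq a n
  | 0 => by rw [qq1, qq0]; omega
  | 1 => by rw [qq2 ha, qq1]; have := hC 1; omega
  | n+2 => by
      have h1 := hC (n+2)
      have h2 := qq_mono_succ ha (n+1)
      rw [qq_rec]
      nlinarith

theorem qq_growth_pow {C : ℕ} (ha : ∀ n, 1 ≤ a n) (hC : ∀ n, a n ≤ C) (m : ℕ) :
    ∀ j, qq a (m + j) ≤ (C+1)^j * qq a m := by
  intro j
  induction j with
  | zero => simp
  | succ j ih =>
    calc qq a (m + (j+1)) = qq a ((m+j)+1) := by ring_nf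
    _ ≤ (C+1) * qq a (m+j) := qq_growth ha hC _
    _ ≤ (C+1) * ((C+1)^j * qq a m) := by exact Nat.mul_le_mul_left _ ih
    _ = (C+1)^(j+1) * qq a m := by ring

theorem st_suffix : ∀ n, st a n <:+ st a (n+2)
  | 0 => by rw [show st a 2 = wpow [false] (a 1 - 1) ++ [true] from by rw [st]]
            exact List.suffix_append _ _
  | n+1 => by rw [st_eq3]; exact List.suffix_append _ _

theorem st_prefix' (ha : ∀ n, 1 ≤ a n) (n : ℕ) (hn : 2 ≤ n) : st a n <+: st a (n+1) := by
  obtain ⟨m, rfl⟩ : ∃ m, n = m + 2 := ⟨n - 2, by omega⟩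
  obtain ⟨k, hk⟩ : ∃ k, a (m+2) = k + 1 := ⟨a (m+2) - 1, by have := ha (m+2); omega⟩
  rw [st_eq3, hk, wpow_succ, List.append_assoc]
  exact List.prefix_append _ _

theorem st_prefix_le (ha : ∀ n, 1 ≤ a n) {n m : ℕ} (hn : 2 ≤ n) (h : n ≤ m) :
    st a n <+: st a m := by
  induction m with
  | zero => omega
  | succ m ih =>
    rcases Nat.lt_or_ge n (m+1) with h' | h'
    · exact (ih (by omega)).trans (st_prefix' ha m (by omega))
    · have : n = m + 1 := by omega
      subst this; exact List.prefix_rfl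

theorem st_infix_le (ha : ∀ n, 1 ≤ a n) {n m : ℕ} (h : n + 2 ≤ m) :
    st a n <:+: st a m :=
  (st_suffix n).isInfix.trans (st_prefix_le ha (by omega) h).isInfix


theorem W_infix_closed {w v : List Bool} (hw : w ∈ sturmW a) (hv : v <:+: w) :
    v ∈ sturmW a := by
  obtain ⟨n, hn, h⟩ := hw
  exact ⟨n, hn, hv.trans h⟩

theorem st_mem_W (n : ℕ) (hn : 1 ≤ n) : st a n ∈ sturmW a := ⟨n, hn, List.infix_rfl⟩

theorem infix_append_cases {w y R : List Bool} (h : w <:+: y ++ R) :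
    w <:+: y ∨ w <:+: R ∨ ∃ w₁ w₂, w = w₁ ++ w₂ ∧ w₁ <:+ y ∧ w₂ <+: R := by
  obtain ⟨s, t, hst⟩ := h
  rw [List.append_assoc] at hst
  rcases List.append_eq_append_iff.mp hst with ⟨a', hy, hwt⟩ | ⟨c', hs, hR⟩
  · rcases List.append_eq_append_iff.mp hwt with ⟨b, ha', ht⟩ | ⟨c, hw, hR⟩
    · left; exact ⟨s, b, by rw [hy, ha', List.append_assoc]⟩
    · right; right; exact ⟨a', c, hw, ⟨s, hy.symm⟩, ⟨t, hR.symm⟩⟩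
  · right; left; exact ⟨c', t, by rw [hR, List.append_assoc]⟩

theorem prefix_append_cases {w y R : List Bool} (h : w <+: y ++ R) :
    w <+: y ∨ ∃ w₂, w = y ++ w₂ ∧ w₂ <+: R := by
  obtain ⟨t, ht⟩ := h
  rcases List.append_eq_append_iff.mp ht with ⟨a', hy, htR⟩ | ⟨c, hw, hR⟩
  · left; exact ⟨a', hy.symm⟩
  · right; exact ⟨c, hw, ⟨t, hR.symm⟩⟩

theorem suffix_append_cases {w y R : List Bool} (h : w <:+ y ++ R) :
    w <:+ R ∨ ∃ w₁, w = w₁ ++ R ∧ w₁ <:+ y := by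
  obtain ⟨s, hs⟩ := h
  rcases List.append_eq_append_iff.mp hs with ⟨a', hy, hw⟩ | ⟨c', hsy, hR⟩
  · right; exact ⟨a', hw, ⟨s, hy.symm⟩⟩
  · left; exact ⟨c', hR.symm⟩

theorem infix_wpow_cases {w y x : List Bool} (k : ℕ) (h : w <:+: wpow y k ++ x)
    (hwy : w.length ≤ y.length) :
    w <:+: y ∨ w <:+: x ∨
      ∃ w₁ w₂, w = w₁ ++ w₂ ∧ w₁ <:+ y ∧ (w₂ <+: y ∨ w₂ <+: x) := by
  induction k with
  | zero =>
    right; left; simpa [wpow_zero] using h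
  | succ k ih =>
    rw [wpow_succ, List.append_assoc] at h
    rcases infix_append_cases h with h1 | h2 | ⟨w₁, w₂, he, h1, h2⟩
    · exact Or.inl h1
    · exact ih h2
    · right; right
      refine ⟨w₁, w₂, he, h1, ?_⟩
      have hw2 : w₂.length ≤ w.length := by rw [he]; simp
      cases k with
      | zero => right; simpa [wpow_zero] using h2
      | succ k =>
        left
        have hy : y <+: wpow y (k+1) ++ x := by
          rw [wpow_succ, List.append_assoc]; exact List.prefix_append _ _
        exact List.prefix_of_prefix_length_le h2 hy (by omega)

theorem suffix_append_right {u v w : List Bool} (h : u <:+ v) : u ++ w <:+ v ++ w := by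
  obtain ⟨s, hs⟩ := h
  exact ⟨s, by rw [← hs, List.append_assoc]⟩

/-- `s_{m+2} s_{m+1}` is a suffix of `s_{m+3}` -/
theorem pair_suffix (ha : ∀ n, 1 ≤ a n) (m : ℕ) :
    st a (m+2) ++ st a (m+1) <:+ st a (m+3) := by
  obtain ⟨k, hk⟩ : ∃ k, a (m+2) = k + 1 := ⟨a (m+2) - 1, by have := ha (m+2); omega⟩
  rw [st_eq3, hk, wpow_succ', List.append_assoc]
  exact List.suffix_append _ _

/-- `s_{m+1} s_{m+2}` is a suffix of `s_{m+4}` -/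
theorem pair_xy (ha : ∀ n, 1 ≤ a n) (m : ℕ) :
    st a (m+1) ++ st a (m+2) <:+ st a (m+4) := by
  have h1 : st a (m+1) ++ st a (m+2) <:+ st a (m+3) ++ st a (m+2) :=
    suffix_append_right (st_suffix (m+1))
  exact h1.trans (pair_suffix ha (m+1))

theorem infix_of_suffix_prefix {w₁ w₂ u v : List Bool} (h1 : w₁ <:+ u) (h2 : w₂ <+: v) :
    w₁ ++ w₂ <:+: u ++ v := by
  obtain ⟨p, hp⟩ := h1
  obtain ⟨q, hq⟩ := h2
  exact ⟨p, q, by rw [← hp, ← hq]; simp [List.append_assoc]⟩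

theorem suffix_descend (ha : ∀ n, 1 ≤ a n) (n : ℕ) :
    ∀ M, n ≤ M → ∀ w : List Bool, w <:+ st a M → w.length ≤ qq a n →
      w <:+ st a n ∨ w <:+ st a (n+1) := by
  intro M
  induction M using Nat.strong_induction_on with
  | _ M ih =>
    intro hM w hw hl
    rcases Nat.lt_or_ge M (n+2) with h' | h'
    · rcases (by omega : M = n ∨ M = n + 1) with rfl | rfl
      · exact Or.inl hw
      · exact Or.inr hw
    · obtain ⟨m, rfl⟩ : ∃ m, M = m + 2 := ⟨M - 2, by omega⟩
      have hsub : w <:+ st a m := by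
        refine List.suffix_of_suffix_length_le hw ((st_suffix m).trans ?_) ?_
        · exact List.suffix_rfl
        · exact le_trans hl (qq_mono ha (by omega))
      exact ih m (by omega) (by omega) w hsub hl

/-- key containment: any Sturmian word of length ≤ q_n is a subword of s_{n+5} -/
theorem contain (ha : ∀ n, 1 ≤ a n) (n : ℕ) (hn : 1 ≤ n) :
    ∀ N (w : List Bool), w <:+: st a N → w.length ≤ qq a n → w <:+: st a (n+5) := by
  intro N
  induction N using Nat.strong_induction_on with
  | _ N ih =>
    intro w hw hl
    rcases Nat.lt_or_ge N (n+5) with hN | hN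
    · -- st a N <:+: st a (n+5)
      refine hw.trans ?_
      rcases Nat.lt_or_ge N 2 with h2 | h2
      · exact (st_suffix N).isInfix.trans (st_prefix_le ha (by omega) (by omega)).isInfix
      · exact (st_prefix_le ha h2 (by omega)).isInfix
    · obtain ⟨m, rfl⟩ : ∃ m, N = m + 3 := ⟨N - 3, by omega⟩
      rw [st_eq3] at hw
      have hly : w.length ≤ (st a (m+2)).length :=
        le_trans hl (qq_mono ha (by omega))
      have hlx : w.length ≤ (st a (m+1)).length :=
        le_trans hl (qq_mono ha (by omega))
      rcases infix_wpow_cases _ hw hly with h1 | h2 | ⟨w₁, w₂, he, h1, h2⟩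
      · exact ih (m+2) (by omega) w h1 hl
      · exact ih (m+1) (by omega) w h2 hl
      · -- straddle
        have hl1 : w₁.length ≤ qq a n := by
          have : w₁.length ≤ w.length := by rw [he]; simp
          omega
        have hl2 : w₂.length ≤ qq a n := by
          have : w₂.length ≤ w.length := by rw [he]; simp
          omega
        -- w₂ is a prefix of st a (n+2)
        have hw₂ : w₂ <+: st a (n+2) := by
          rcases h2 with h2 | h2
          · exact List.prefix_of_prefix_length_le h2
              (st_prefix_le ha (by omega) (by omega))
              (le_trans hl2 (qq_mono ha (by omega)))
          · exact List.prefix_of_prefix_length_le h2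
              (st_prefix_le ha (by omega) (by omega))
              (le_trans hl2 (qq_mono ha (by omega)))
        -- w₁ is a suffix of st a (n+1) or st a (n+2)
        have hw₁ : w₁ <:+ st a (n+1) ∨ w₁ <:+ st a (n+2) := by
          rcases suffix_descend ha n (m+2) (by omega) w₁ h1 hl1 with h | h
          · exact Or.inr (h.trans (st_suffix n))
          · exact Or.inl h
        rcases hw₁ with h | h
        · -- w <:+: st a (n+1) ++ st a (n+2) <:+ st a (n+5)
          have := infix_of_suffix_prefix h hw₂
          rw [← he] at this
          exact this.trans ((pair_xy ha n).isInfix.trans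
            (st_prefix' ha (n+4) (by omega)).isInfix)
        · have := infix_of_suffix_prefix h hw₂
          rw [← he] at this
          have hext : st a (n+2) ++ st a (n+2) <+: st a (n+2) ++ st a (n+3) := by
            obtain ⟨t, ht⟩ := st_prefix' ha (n+2) (by omega)
            exact ⟨t, by rw [← ht, List.append_assoc]⟩
          exact this.trans (hext.isInfix.trans (pair_xy ha (n+1)).isInfix)


/-! ### Part 2 : estimates for subadditive functions -/

variable {F : List Bool → ℝ} {d : ℝ}

theorem wpow_tail_suffix {y x : List Bool} {j k : ℕ} (h : j ≤ k) :
    wpow y j ++ x <:+ wpow y k ++ x := by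
  refine ⟨wpow y (k - j), ?_⟩
  rw [← List.append_assoc, ← wpow_add]
  congr 2
  omega

theorem tail_mem (ha : ∀ n, 1 ≤ a n) (p j : ℕ) (hj : j ≤ a (p+2)) :
    wpow (st a (p+2)) j ++ st a (p+1) ∈ sturmW a :=
  ⟨p+3, by omega, by rw [st_eq3]; exact (wpow_tail_suffix hj).isInfix⟩

theorem F_wpow_le (ha : ∀ n, 1 ≤ a n)
    (hsub : ∀ u v : List Bool, u ∈ sturmW a → v ∈ sturmW a → u ++ v ∈ sturmW a →
      F (u ++ v) ≤ F u + F v) (p : ℕ) :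
    ∀ j, j ≤ a (p+2) →
      F (wpow (st a (p+2)) j ++ st a (p+1)) ≤
        j * F (st a (p+2)) + F (st a (p+1)) := by
  intro j
  induction j with
  | zero => intro _; simp [wpow_zero]
  | succ j ih =>
    intro hj
    have he : wpow (st a (p+2)) (j+1) ++ st a (p+1)
        = st a (p+2) ++ (wpow (st a (p+2)) j ++ st a (p+1)) := by
      rw [wpow_succ, List.append_assoc]
    have hs : F (st a (p+2) ++ (wpow (st a (p+2)) j ++ st a (p+1)))
        ≤ F (st a (p+2)) + F (wpow (st a (p+2)) j ++ st a (p+1)) := by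
      refine hsub _ _ (st_mem_W _ (by omega)) (tail_mem ha p j (by omega)) ?_
      rw [← he]; exact tail_mem ha p (j+1) hj
    have hih := ih (by omega)
    rw [he]
    push_cast
    have hr : ((j:ℝ)+1) * F (st a (p+2)) = (j:ℝ) * F (st a (p+2)) + F (st a (p+2)) := by
      ring
    linarith

theorem F_st_le (ha : ∀ n, 1 ≤ a n)
    (hsub : ∀ u v : List Bool, u ∈ sturmW a → v ∈ sturmW a → u ++ v ∈ sturmW a →
      F (u ++ v) ≤ F u + F v)
    {n : ℕ} (hn : 1 ≤ n) {μ : ℝ}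
    (hx : F (st a n) ≤ μ * qq a n) (hy : F (st a (n+1)) ≤ μ * qq a (n+1)) :
    ∀ m, n ≤ m → F (st a m) ≤ μ * qq a m := by
  intro m
  induction m using Nat.strong_induction_on with
  | _ m ih =>
    intro hm
    rcases Nat.lt_or_ge m (n+2) with h' | h'
    · rcases (by omega : m = n ∨ m = n + 1) with rfl | rfl
      · exact hx
      · exact hy
    · obtain ⟨p, rfl⟩ : ∃ p, m = p + 3 := ⟨m - 3, by omega⟩
      have ihy := ih (p+2) (by omega) (by omega)
      have ihx := ih (p+1) (by omega) (by omega)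
      have hw := F_wpow_le ha hsub p (a (p+2)) le_rfl
      have hq : (qq a (p+3) : ℝ) = (a (p+2) : ℝ) * qq a (p+2) + qq a (p+1) := by
        rw [qq_rec]; push_cast; ring
      have hmul : (a (p+2) : ℝ) * F (st a (p+2)) ≤ (a (p+2) : ℝ) * (μ * qq a (p+2)) :=
        mul_le_mul_of_nonneg_left ihy (Nat.cast_nonneg _)
      have hring : μ * ((a (p+2) : ℝ) * qq a (p+2) + qq a (p+1))
          = (a (p+2) : ℝ) * (μ * qq a (p+2)) + μ * qq a (p+1) := by ring
      rw [show st a (p+3) = wpow (st a (p+2)) (a (p+2)) ++ st a (p+1) from st_eq3 a p,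
        hq, hring]
      linarith

theorem small_bound (hd0 : 0 ≤ d) (hd : ∀ w ∈ sturmW a, |F w| ≤ d * w.length)
    {μ : ℝ} {Q : ℕ} :
    ∀ w ∈ sturmW a, w.length ≤ Q → F w ≤ μ * w.length + (d + |μ|) * Q := by
  intro w hw hl
  have h1 : F w ≤ d * w.length := le_trans (le_abs_self _) (hd w hw)
  have h2 : (w.length : ℝ) ≤ Q := Nat.cast_le.mpr hl
  have h3 : (0:ℝ) ≤ w.length := Nat.cast_nonneg _
  nlinarith [neg_abs_le μ, le_abs_self μ, abs_nonneg μ]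

theorem Qpref (ha : ∀ n, 1 ≤ a n)
    (hsub : ∀ u v : List Bool, u ∈ sturmW a → v ∈ sturmW a → u ++ v ∈ sturmW a →
      F (u ++ v) ≤ F u + F v)
    {p : ℕ} {μ B : ℝ}
    (h1 : ∀ w, w <+: st a (p+1) → F w ≤ μ * w.length + B)
    (h2 : ∀ w, w <+: st a (p+2) → F w ≤ μ * w.length + B)
    (hFy : F (st a (p+2)) ≤ μ * qq a (p+2)) :
    ∀ j, j ≤ a (p+2) → ∀ w, w <+: wpow (st a (p+2)) j ++ st a (p+1) →
      F w ≤ μ * w.length + B := by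
  intro j
  induction j with
  | zero => intro _ w hw; exact h1 w (by simpa [wpow_zero] using hw)
  | succ j ih =>
    intro hj w hw
    rw [wpow_succ, List.append_assoc] at hw
    rcases prefix_append_cases hw with h | ⟨w', rfl, hw'⟩
    · exact h2 w h
    · have m2 := tail_mem ha p j (by omega)
      have m2' : w' ∈ sturmW a := W_infix_closed m2 hw'.isInfix
      have m3 : st a (p+2) ++ w' ∈ sturmW a := by
        refine W_infix_closed (tail_mem ha p (j+1) hj) ?_
        obtain ⟨t, ht⟩ := hw'
        have hpre : st a (p+2) ++ w' <+: wpow (st a (p+2)) (j+1) ++ st a (p+1) := by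
          refine ⟨t, ?_⟩
          rw [wpow_succ, List.append_assoc, List.append_assoc, ht]
        exact hpre.isInfix
      have hs := hsub (st a (p+2)) w' (st_mem_W _ (by omega)) m2' m3
      have hih := ih (by omega) w' hw'
      rw [List.length_append, show (st a (p+2)).length = qq a (p+2) from rfl]
      push_cast
      have hr : μ * ((qq a (p+2) : ℝ) + (w'.length : ℝ))
          = μ * (qq a (p+2) : ℝ) + μ * (w'.length : ℝ) := by ring
      rw [hr]
      linarith

theorem Pref (ha : ∀ n, 1 ≤ a n)
    (hsub : ∀ u v : List Bool, u ∈ sturmW a → v ∈ sturmW a → u ++ v ∈ sturmW a →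
      F (u ++ v) ≤ F u + F v)
    (hd0 : 0 ≤ d) (hd : ∀ w ∈ sturmW a, |F w| ≤ d * w.length)
    {n : ℕ} (hn : 1 ≤ n) {μ : ℝ}
    (hx : F (st a n) ≤ μ * qq a n) (hy : F (st a (n+1)) ≤ μ * qq a (n+1)) :
    ∀ N, n ≤ N → ∀ w, w <+: st a N →
      F w ≤ μ * w.length + (d + |μ|) * qq a (n+1) := by
  intro N
  induction N using Nat.strong_induction_on with
  | _ N ih =>
    intro hN w hw
    rcases Nat.lt_or_ge N (n+2) with h' | h'
    · refine small_bound hd0 hd w ⟨N, by omega, hw.isInfix⟩ ?_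
      exact le_trans hw.length_le (qq_mono ha (by omega))
    · obtain ⟨p, rfl⟩ : ∃ p, N = p + 3 := ⟨N - 3, by omega⟩
      rw [st_eq3 a p] at hw
      exact Qpref ha hsub
        (fun w hw => ih (p+1) (by omega) (by omega) w hw)
        (fun w hw => ih (p+2) (by omega) (by omega) w hw)
        (F_st_le ha hsub hn hx hy (p+2) (by omega))
        (a (p+2)) le_rfl w hw

theorem Qsuf (ha : ∀ n, 1 ≤ a n)
    (hsub : ∀ u v : List Bool, u ∈ sturmW a → v ∈ sturmW a → u ++ v ∈ sturmW a →
      F (u ++ v) ≤ F u + F v)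
    {p : ℕ} {μ B : ℝ}
    (h1 : ∀ w, w <:+ st a (p+1) → F w ≤ μ * w.length + B)
    (h2 : ∀ w, w <:+ st a (p+2) → F w ≤ μ * w.length + B)
    (hFy : F (st a (p+2)) ≤ μ * qq a (p+2)) (hFx : F (st a (p+1)) ≤ μ * qq a (p+1)) :
    ∀ j, j ≤ a (p+2) → ∀ w, w <:+ wpow (st a (p+2)) j ++ st a (p+1) →
      F w ≤ μ * w.length + B := by
  intro j
  induction j with
  | zero => intro _ w hw; exact h1 w (by simpa [wpow_zero] using hw)
  | succ j ih =>
    intro hj w hw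
    rw [wpow_succ, List.append_assoc] at hw
    rcases suffix_append_cases hw with h | ⟨w₁, rfl, hw₁⟩
    · exact ih (by omega) w h
    · have m2 := tail_mem ha p j (by omega)
      have m1 : w₁ ∈ sturmW a :=
        W_infix_closed (st_mem_W (p+2) (by omega)) hw₁.isInfix
      have m3 : w₁ ++ (wpow (st a (p+2)) j ++ st a (p+1)) ∈ sturmW a := by
        refine W_infix_closed (tail_mem ha p (j+1) hj) ?_
        obtain ⟨s, hs⟩ := hw₁
        have hsuf : w₁ ++ (wpow (st a (p+2)) j ++ st a (p+1))
            <:+ wpow (st a (p+2)) (j+1) ++ st a (p+1) := by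
          refine ⟨s, ?_⟩
          rw [wpow_succ, List.append_assoc, ← List.append_assoc s, hs]
        exact hsuf.isInfix
      have hs2 : F (w₁ ++ (wpow (st a (p+2)) j ++ st a (p+1)))
          ≤ F w₁ + F (wpow (st a (p+2)) j ++ st a (p+1)) := hsub _ _ m1 m2 m3
      have hFR : F (wpow (st a (p+2)) j ++ st a (p+1))
          ≤ μ * (((wpow (st a (p+2)) j ++ st a (p+1)).length : ℕ) : ℝ) := by
        have h := F_wpow_le ha hsub p j (by omega)
        have hlen : (((wpow (st a (p+2)) j ++ st a (p+1)).length : ℕ) : ℝ)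
            = (j : ℝ) * (qq a (p+2) : ℝ) + (qq a (p+1) : ℝ) := by
          rw [List.length_append, wpow_length]
          push_cast
          rfl
        have hmul : (j:ℝ) * F (st a (p+2)) ≤ (j:ℝ) * (μ * qq a (p+2)) :=
          mul_le_mul_of_nonneg_left hFy (Nat.cast_nonneg _)
        have hr : μ * ((j:ℝ) * (qq a (p+2) : ℝ) + (qq a (p+1) : ℝ))
            = (j:ℝ) * (μ * (qq a (p+2) : ℝ)) + μ * (qq a (p+1) : ℝ) := by ring
        rw [hlen, hr]
        linarith
      have hw1b := h2 w₁ hw₁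
      have hlen2 : (((w₁ ++ (wpow (st a (p+2)) j ++ st a (p+1))).length : ℕ) : ℝ)
          = (w₁.length : ℝ) + (((wpow (st a (p+2)) j ++ st a (p+1)).length : ℕ) : ℝ) := by
        rw [List.length_append]
        push_cast
        ring
      rw [hlen2]
      have hr2 : μ * ((w₁.length : ℝ) + (((wpow (st a (p+2)) j ++ st a (p+1)).length : ℕ) : ℝ))
          = μ * (w₁.length : ℝ)
            + μ * (((wpow (st a (p+2)) j ++ st a (p+1)).length : ℕ) : ℝ) := by ring
      rw [hr2]
      linarith


theorem Suff (ha : ∀ n, 1 ≤ a n)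
    (hsub : ∀ u v : List Bool, u ∈ sturmW a → v ∈ sturmW a → u ++ v ∈ sturmW a →
      F (u ++ v) ≤ F u + F v)
    (hd0 : 0 ≤ d) (hd : ∀ w ∈ sturmW a, |F w| ≤ d * w.length)
    {n : ℕ} (hn : 1 ≤ n) {μ : ℝ}
    (hx : F (st a n) ≤ μ * qq a n) (hy : F (st a (n+1)) ≤ μ * qq a (n+1)) :
    ∀ N, n ≤ N → ∀ w, w <:+ st a N →
      F w ≤ μ * w.length + (d + |μ|) * qq a (n+1) := by
  intro N
  induction N using Nat.strong_induction_on with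
  | _ N ih =>
    intro hN w hw
    rcases Nat.lt_or_ge N (n+2) with h' | h'
    · refine small_bound hd0 hd w ⟨N, by omega, hw.isInfix⟩ ?_
      exact le_trans hw.length_le (qq_mono ha (by omega))
    · obtain ⟨p, rfl⟩ : ∃ p, N = p + 3 := ⟨N - 3, by omega⟩
      rw [st_eq3 a p] at hw
      exact Qsuf ha hsub
        (fun w hw => ih (p+1) (by omega) (by omega) w hw)
        (fun w hw => ih (p+2) (by omega) (by omega) w hw)
        (F_st_le ha hsub hn hx hy (p+2) (by omega))
        (F_st_le ha hsub hn hx hy (p+1) (by omega))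
        (a (p+2)) le_rfl w hw

theorem Qinf (ha : ∀ n, 1 ≤ a n)
    (hsub : ∀ u v : List Bool, u ∈ sturmW a → v ∈ sturmW a → u ++ v ∈ sturmW a →
      F (u ++ v) ≤ F u + F v)
    {p : ℕ} {μ B : ℝ}
    (hyinf : ∀ w, w <:+: st a (p+2) → F w ≤ μ * w.length + 2*B)
    (hxinf : ∀ w, w <:+: st a (p+1) → F w ≤ μ * w.length + 2*B)
    (hysuf : ∀ w, w <:+ st a (p+2) → F w ≤ μ * w.length + B)
    (hpref : ∀ j, j ≤ a (p+2) → ∀ w, w <+: wpow (st a (p+2)) j ++ st a (p+1) →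
      F w ≤ μ * w.length + B) :
    ∀ j, j ≤ a (p+2) → ∀ w, w <:+: wpow (st a (p+2)) j ++ st a (p+1) →
      F w ≤ μ * w.length + 2*B := by
  intro j
  induction j with
  | zero => intro _ w hw; exact hxinf w (by simpa [wpow_zero] using hw)
  | succ j ih =>
    intro hj w hw
    rw [wpow_succ, List.append_assoc] at hw
    rcases infix_append_cases hw with h | h | ⟨w₁, w₂, rfl, h1, h2⟩
    · exact hyinf w h
    · exact ih (by omega) w h
    · have m1 : w₁ ∈ sturmW a :=
        W_infix_closed (st_mem_W (p+2) (by omega)) h1.isInfix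
      have m2 : w₂ ∈ sturmW a := W_infix_closed (tail_mem ha p j (by omega)) h2.isInfix
      have m3 : w₁ ++ w₂ ∈ sturmW a := by
        refine W_infix_closed (tail_mem ha p (j+1) hj) ?_
        obtain ⟨s, hs⟩ := h1
        obtain ⟨t, ht⟩ := h2
        refine ⟨s, t, ?_⟩
        calc s ++ (w₁ ++ w₂) ++ t = (s ++ w₁) ++ (w₂ ++ t) := by
              simp [List.append_assoc]
        _ = st a (p+2) ++ (wpow (st a (p+2)) j ++ st a (p+1)) := by rw [hs, ht]
        _ = wpow (st a (p+2)) (j+1) ++ st a (p+1) := by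
              rw [wpow_succ, List.append_assoc]
      have hs2 := hsub w₁ w₂ m1 m2 m3
      have hb1 := hysuf w₁ h1
      have hb2 := hpref j (by omega) w₂ h2
      have hlen2 : (((w₁ ++ w₂).length : ℕ) : ℝ) = (w₁.length:ℝ) + (w₂.length:ℝ) := by
        rw [List.length_append]; push_cast; ring
      rw [hlen2]
      have hr : μ * ((w₁.length:ℝ) + (w₂.length:ℝ))
          = μ * (w₁.length:ℝ) + μ * (w₂.length:ℝ) := by ring
      rw [hr]
      linarith

theorem Finfix (ha : ∀ n, 1 ≤ a n)
    (hsub : ∀ u v : List Bool, u ∈ sturmW a → v ∈ sturmW a → u ++ v ∈ sturmW a →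
      F (u ++ v) ≤ F u + F v)
    (hd0 : 0 ≤ d) (hd : ∀ w ∈ sturmW a, |F w| ≤ d * w.length)
    {n : ℕ} (hn : 1 ≤ n) {μ : ℝ}
    (hx : F (st a n) ≤ μ * qq a n) (hy : F (st a (n+1)) ≤ μ * qq a (n+1)) :
    ∀ N, n ≤ N → ∀ w, w <:+: st a N →
      F w ≤ μ * w.length + 2 * ((d + |μ|) * qq a (n+1)) := by
  intro N
  induction N using Nat.strong_induction_on with
  | _ N ih =>
    intro hN w hw
    have hB : (0:ℝ) ≤ (d + |μ|) * (qq a (n+1) : ℝ) :=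
      mul_nonneg (by positivity) (Nat.cast_nonneg _)
    rcases Nat.lt_or_ge N (n+2) with h' | h'
    · have hsb : F w ≤ μ * w.length + (d + |μ|) * qq a (n+1) := by
        refine small_bound hd0 hd w ⟨N, by omega, hw⟩ ?_
        exact le_trans hw.length_le (qq_mono ha (show N ≤ n+1 by omega))
      linarith
    · obtain ⟨p, rfl⟩ : ∃ p, N = p + 3 := ⟨N - 3, by omega⟩
      rw [st_eq3 a p] at hw
      refine Qinf ha hsub
        (fun w hw => ih (p+2) (by omega) (by omega) w hw)
        (fun w hw => ih (p+1) (by omega) (by omega) w hw)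
        (fun w hw => Suff ha hsub hd0 hd hn hx hy (p+2) (by omega) w hw)
        (Qpref ha hsub
          (fun w hw => Pref ha hsub hd0 hd hn hx hy (p+1) (by omega) w hw)
          (fun w hw => Pref ha hsub hd0 hd hn hx hy (p+2) (by omega) w hw)
          (F_st_le ha hsub hn hx hy (p+2) (by omega)))
        (a (p+2)) le_rfl w hw

theorem F_upper (ha : ∀ n, 1 ≤ a n)
    (hsub : ∀ u v : List Bool, u ∈ sturmW a → v ∈ sturmW a → u ++ v ∈ sturmW a →
      F (u ++ v) ≤ F u + F v)
    (hd0 : 0 ≤ d) (hd : ∀ w ∈ sturmW a, |F w| ≤ d * w.length)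
    {n : ℕ} (hn : 1 ≤ n) {μ : ℝ}
    (hx : F (st a n) ≤ μ * qq a n) (hy : F (st a (n+1)) ≤ μ * qq a (n+1)) :
    ∀ w ∈ sturmW a, F w ≤ μ * w.length + 2 * ((d + |μ|) * qq a (n+1)) := by
  intro w hw
  obtain ⟨N₀, hN₀, hinf⟩ := hw
  have h2 : w <:+: st a (N₀ + n + 2) :=
    hinf.trans (st_infix_le ha (by omega))
  exact Finfix ha hsub hd0 hd hn hx hy (N₀ + n + 2) (by omega) w h2

end SturmAux

open SturmAux

/-- Corollary 4.5, uniform subadditive ergodic theorem for Sturmian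
systems with bounded continued fraction expansion. If the coefficient sequence
`(a_n)` is bounded, then for every subadditive `F` on `𝒲(α)` the means `F(w_n)/|w_n|`
converge along every sequence with `|w_n| → ∞`, with limit independent of the sequence. -/
theorem sturmian_subadditive_ergodic (a : ℕ → ℕ) (ha : ∀ n, 1 ≤ a n)
    (hbdd : ∃ C : ℕ, ∀ n, a n ≤ C)
    (F : List Bool → ℝ) (hF : WordSubadditive (sturmW a) F) :
    ∃ L : ℝ, ∀ w : ℕ → List Bool, (∀ n, w n ∈ sturmW a) →
      Tendsto (fun n => (w n).length) atTop atTop →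
      Tendsto (fun n => F (w n) / (w n).length) atTop (nhds L) := by
  classical
  obtain ⟨hsub, d, hd0, hd⟩ := hF
  obtain ⟨C, hC⟩ := hbdd
  have hqpos : ∀ m, (0:ℝ) < (qq a m : ℝ) := fun m => by exact_mod_cast qq_pos ha m
  have hqlen : ∀ m, ((st a m).length : ℝ) = (qq a m : ℝ) := fun m => rfl
  set Mn : ℕ → ℝ := fun n =>
    max (F (st a (n+1)) / (qq a (n+1) : ℝ)) (F (st a (n+2)) / (qq a (n+2) : ℝ))
    with hMn_def
  have hr_lb : ∀ m, 1 ≤ m → -d ≤ F (st a m) / (qq a m : ℝ) := by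
    intro m hm
    have h1 := hd (st a m) (st_mem_W m hm)
    rw [hqlen m] at h1
    rw [le_div_iff₀ (hqpos m)]
    have := (abs_le.mp h1).1
    linarith
  have hMn_lb : ∀ n, -d ≤ Mn n := fun n =>
    le_trans (hr_lb (n+1) (by omega)) (le_max_left _ _)
  have hbb : BddBelow (Set.range Mn) := ⟨-d, by rintro x ⟨n, rfl⟩; exact hMn_lb n⟩
  set L : ℝ := ⨅ n, Mn n with hL_def
  have hL_le : ∀ n, L ≤ Mn n := fun n => ciInf_le hbb n
  refine ⟨L, ?_⟩
  -- F at standard words is bounded above by `Mn n` times length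
  have hMn_x : ∀ n, F (st a (n+1)) ≤ Mn n * qq a (n+1) := by
    intro n
    have h := le_max_left (F (st a (n+1)) / (qq a (n+1) : ℝ))
      (F (st a (n+2)) / (qq a (n+2) : ℝ))
    exact (div_le_iff₀ (hqpos (n+1))).mp h
  have hMn_y : ∀ n, F (st a (n+2)) ≤ Mn n * qq a (n+2) := by
    intro n
    have h := le_max_right (F (st a (n+1)) / (qq a (n+1) : ℝ))
      (F (st a (n+2)) / (qq a (n+2) : ℝ))
    exact (div_le_iff₀ (hqpos (n+2))).mp h
  -- uniform upper bound, parametrized by n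
  have hupper : ∀ n, ∀ w ∈ sturmW a,
      F w ≤ Mn n * w.length + 2 * ((d + |Mn n|) * qq a (n+2)) := by
    intro n w hw
    exact F_upper ha hsub hd0 hd (n := n+1) (by omega) (hMn_x n) (hMn_y n) w hw
  -- the key uniform convergence estimate
  have key : ∀ ε : ℝ, 0 < ε → ∃ ℓ : ℕ, ∀ w ∈ sturmW a, ℓ ≤ w.length →
      |F w / (w.length : ℝ) - L| ≤ ε := by
    intro ε hε
    set K : ℝ := ((C:ℝ)+1)^7 with hK_def
    have hC1 : (1:ℝ) ≤ (C:ℝ)+1 := by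
      have : (0:ℝ) ≤ (C:ℝ) := Nat.cast_nonneg _
      linarith
    have hK1 : (1:ℝ) ≤ K := one_le_pow₀ hC1
    set ε' : ℝ := ε / (2 * (K + 1)) with hε'_def
    have hε'pos : 0 < ε' := by positivity
    have hε'K : ε' * K ≤ ε / 2 := by
      rw [hε'_def, div_mul_eq_mul_div, div_le_div_iff₀ (by positivity) (by norm_num)]
      nlinarith [hε.le, hK1]
    have hε'le : ε' ≤ ε / 2 := by
      rw [hε'_def, div_le_div_iff₀ (by positivity) (by norm_num)]
      nlinarith [hε.le, hK1]
    obtain ⟨n₀, hn₀⟩ : ∃ n, Mn n < L + ε' := by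
      by_contra hcon
      push_neg at hcon
      have h1 : L + ε' ≤ ⨅ n, Mn n := le_ciInf hcon
      rw [← hL_def] at h1
      linarith
    set c₀ : ℝ := 2 * ((d + |Mn n₀|) * qq a (n₀+2)) with hc₀_def
    have hc₀0 : 0 ≤ c₀ := by
      have : (0:ℝ) ≤ d + |Mn n₀| := add_nonneg hd0 (abs_nonneg _)
      have := mul_nonneg this (Nat.cast_nonneg (α := ℝ) (qq a (n₀+2)))
      linarith
    have hub : ∀ w ∈ sturmW a, F w ≤ (L + ε') * w.length + c₀ := by
      intro w hw
      have h1 := hupper n₀ w hw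
      have h2 : Mn n₀ * (w.length:ℝ) ≤ (L + ε') * w.length :=
        mul_le_mul_of_nonneg_right hn₀.le (Nat.cast_nonneg _)
      rw [← hc₀_def] at h1
      linarith
    refine ⟨max 2 (Nat.ceil (4 * c₀ / ε)), ?_⟩
    intro w hwmem hlen
    have hw2 : 2 ≤ w.length := le_trans (le_max_left _ _) hlen
    have hwpos : (0:ℝ) < (w.length : ℝ) := by
      have : (2:ℝ) ≤ (w.length : ℝ) := by exact_mod_cast hw2
      linarith
    have hlenR : 4 * c₀ / ε ≤ (w.length : ℝ) := by
      refine le_trans (Nat.le_ceil _) ?_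
      exact_mod_cast le_trans (le_max_right _ _) hlen
    have e3 : 2 * c₀ ≤ (ε/2) * (w.length:ℝ) := by
      have h2 : (ε/2) * (4*c₀/ε) ≤ (ε/2) * (w.length:ℝ) :=
        mul_le_mul_of_nonneg_left hlenR (by positivity)
      have h3 : (ε/2) * (4*c₀/ε) = 2*c₀ := by field_simp; ring
      linarith
    -- upper estimate
    have hUB : F w / (w.length:ℝ) ≤ L + ε := by
      rw [div_le_iff₀ hwpos]
      have h1 := hub w hwmem
      have h4 : ε' * (w.length:ℝ) ≤ (ε/2) * (w.length:ℝ) :=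
        mul_le_mul_of_nonneg_right hε'le (Nat.cast_nonneg _)
      have r1 : (L+ε) * (w.length:ℝ)
          = L * w.length + (ε/2) * w.length + (ε/2)*w.length := by ring
      have r2 : (L+ε') * (w.length:ℝ) = L * w.length + ε' * w.length := by ring
      linarith
    -- lower estimate
    have hLB : L - ε ≤ F w / (w.length:ℝ) := by
      obtain ⟨N₀, hN₀1, hwN⟩ := id hwmem
      have hfind : ∃ n, w.length ≤ qq a n := ⟨w.length + 1, qq_ge ha w.length⟩
      set n₁ := Nat.find hfind with hn₁_def
      have hn₁ : w.length ≤ qq a n₁ := Nat.find_spec hfind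
      have hn₁2 : 2 ≤ n₁ := by
        by_contra h
        push_neg at h
        have hq1 : qq a n₁ = 1 := by
          rcases (by omega : n₁ = 0 ∨ n₁ = 1) with h0 | h0 <;> rw [h0] <;> rfl
        omega
      have hprev : qq a (n₁ - 1) < w.length := by
        have := Nat.find_min hfind (show n₁ - 1 < n₁ by omega)
        omega
      have hcont : w <:+: st a (n₁ + 5) := contain ha n₁ (by omega) N₀ w hwN hn₁
      have hM := hL_le (n₁ + 4)
      rw [hMn_def] at hM
      simp only at hM
      obtain ⟨M, hMw, hML, hMq, hMlb⟩ : ∃ M, w <:+: st a M ∧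
          L * (qq a M : ℝ) ≤ F (st a M) ∧ M ≤ n₁ + 6 ∧ 1 ≤ M := by
        rcases le_max_iff.mp hM with h | h
        · exact ⟨n₁+5, hcont, (le_div_iff₀ (hqpos _)).mp h, by omega, by omega⟩
        · exact ⟨n₁+6, hcont.trans (st_prefix' ha (n₁+5) (by omega)).isInfix,
            (le_div_iff₀ (hqpos _)).mp h, by omega, by omega⟩
      have hqM : (qq a M : ℝ) ≤ K * w.length := by
        have h1 : qq a M ≤ qq a (n₁ + 6) := qq_mono ha hMq
        have h2 : qq a (n₁ + 6) ≤ (C+1)^7 * qq a (n₁ - 1) := by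
          have h := qq_growth_pow ha hC (n₁ - 1) 7
          rwa [show n₁ - 1 + 7 = n₁ + 6 by omega] at h
        have h3 : qq a (n₁ - 1) ≤ w.length := by omega
        calc (qq a M : ℝ) ≤ (((C+1)^7 * qq a (n₁-1) : ℕ) : ℝ) := by
              exact_mod_cast le_trans h1 h2
        _ ≤ (((C+1)^7 * w.length : ℕ) : ℝ) := by
              exact_mod_cast Nat.mul_le_mul_left _ h3
        _ = K * w.length := by rw [hK_def]; push_cast; ring
      obtain ⟨u, v, huv⟩ := hMw
      have hmemstM : st a M ∈ sturmW a := st_mem_W M (by omega)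
      have hmu : u ∈ sturmW a := by
        refine W_infix_closed hmemstM ⟨[], w ++ v, ?_⟩
        simpa [List.append_assoc] using huv
      have hmv : v ∈ sturmW a := by
        refine W_infix_closed hmemstM ⟨u ++ w, [], ?_⟩
        simpa [List.append_assoc] using huv
      have hmuw : u ++ w ∈ sturmW a := by
        refine W_infix_closed hmemstM ⟨[], v, ?_⟩
        simpa [List.append_assoc] using huv
      have hs1 : F (st a M) ≤ F (u ++ w) + F v := by
        rw [← huv]
        exact hsub (u++w) v hmuw hmv (by rw [huv]; exact hmemstM)
      have hs2 : F (u ++ w) ≤ F u + F w := hsub u w hmu hwmem hmuw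
      have hFu := hub u hmu
      have hFv := hub v hmv
      have hlen_sum : (qq a M : ℝ) = (u.length:ℝ) + w.length + v.length := by
        have h : (st a M).length = u.length + w.length + v.length := by
          rw [← huv]; simp only [List.length_append]
        rw [← hqlen M, h]; push_cast; ring
      rw [le_div_iff₀ hwpos]
      have e1 : ε' * (qq a M : ℝ) ≤ ε' * (K * w.length) :=
        mul_le_mul_of_nonneg_left hqM hε'pos.le
      have e2 : (ε' * K) * (w.length:ℝ) ≤ (ε/2) * w.length :=
        mul_le_mul_of_nonneg_right hε'K (Nat.cast_nonneg _)
      have r1 : (L+ε') * (u.length:ℝ) + (L+ε') * (v.length:ℝ)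
          + (L+ε') * (w.length:ℝ) = (L+ε') * (qq a M : ℝ) := by
        rw [hlen_sum]; ring
      have r2 : (L+ε') * (qq a M:ℝ) = L * (qq a M:ℝ) + ε' * (qq a M:ℝ) := by ring
      have r3 : ε' * (K * (w.length:ℝ)) = (ε'*K) * (w.length:ℝ) := by ring
      have r4 : (L+ε') * (w.length:ℝ) = L*(w.length:ℝ) + ε'*(w.length:ℝ) := by ring
      have r5 : (L-ε)*(w.length:ℝ) = L*(w.length:ℝ) - ε*(w.length:ℝ) := by ring
      have r6 : ε*(w.length:ℝ) = (ε/2)*(w.length:ℝ) + (ε/2)*(w.length:ℝ) := by ring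
      have hε'w : 0 ≤ ε' * (w.length:ℝ) := by positivity
      linarith
    rw [abs_le]
    constructor <;> linarith
  -- conclude
  intro w hwmem hwlen
  rw [Metric.tendsto_atTop]
  intro ε hε
  obtain ⟨ℓ, hℓ⟩ := key (ε/2) (by linarith)
  obtain ⟨N, hN⟩ := Filter.eventually_atTop.mp (hwlen.eventually_ge_atTop ℓ)
  refine ⟨N, fun n hn => ?_⟩
  have h := hℓ (w n) (hwmem n) (hN n hn)
  rw [Real.dist_eq]
  calc |F (w n) / ((w n).length:ℝ) - L| ≤ ε/2 := h
  _ < ε := by linarith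

end
end

section
/- Let A ⊂ ℝ be a finite alphabet and 𝒲 a linearly repetitive language over A. Fix E ∈ ℂ. Then there exists γ(E) ∈ ℝ such that for every sequence (w_n) in 𝒲 with |w_n| → ∞, the limit lim_{n→∞} (1/|w_n|)·ln‖M(E)(w_n)‖ exists and equals γ(E) (in particular it is independent of the sequence). -/
/-!
Transfer matrices have determinant one, so `F w := log ‖M(E)(w)‖` is nonnegative, and it is
subadditive under concatenation. Its maximum `a n` over the words of length `n` is then
subadditive, and Fekete's lemma gives `a n / n → γ = inf a n / n`, which bounds `F w / |w|`
from above. For the lower bound on a word `v`, linear repetitivity puts `v` into every window of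
length `L ≈ c |v|`, so a maximizing word `u` of length `2L` splits as `p₀ v p₁ v ⋯ v pₖ` with
`k ≥ 1` and short gaps `pᵢ`. Subadditivity of `F - γ |·|` and `a m ≤ (γ + δ) m + C` on the gaps
yield `0 ≤ F u - γ |u| ≤ k (F v - γ |v|) + (k + 1)(δ L + C)`, i.e.
`F v ≥ γ |v| - 2 (δ L + C)`; as `δ > 0` is arbitrary and `L ≈ c |v|`, this is
`γ |v| - o(|v|)`.
-/

open Filter

noncomputable section

/-- The one-step transfer matrix `T(E,a)`. -/
def transferMat (E : ℂ) (x : ℝ) : Matrix (Fin 2) (Fin 2) ℂ :=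
  !![E - (x : ℂ), -1; 1, 0]

/-- The transfer matrix `M(E)(w) = T(E,w_n) ⋯ T(E,w_1)` over a word `w = w_1 ⋯ w_n`. -/
def transferProd (E : ℂ) (w : List ℝ) : Matrix (Fin 2) (Fin 2) ℂ :=
  (w.reverse.map (transferMat E)).prod

/-- The operator norm of a `2 × 2` complex matrix (acting on Euclidean `ℂ²`). -/
def opNorm (M : Matrix (Fin 2) (Fin 2) ℂ) : ℝ :=
  ‖LinearMap.toContinuousLinearMap (Matrix.toEuclideanLin M)‖

open Topology
open scoped Matrix.Norms.L2Operator

theorem Matrix.nnnorm_det_le_l2_opNNNorm_pow {n : Type*} [Fintype n] [DecidableEq n]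
    [Nonempty n] (A : Matrix n n ℂ) : ‖A.det‖₊ ≤ ‖A‖₊ ^ Fintype.card n := by
  rw [A.det_eq_prod_roots_charpoly, ← A.charpoly_natDegree_eq_dim,
    ← IsAlgClosed.card_roots_eq_natDegree]
  have hprod := map_multiset_prod (nnnormHom : ℂ →*₀ NNReal) A.charpoly.roots
  simp only [nnnormHom, MonoidWithZeroHom.coe_mk, ZeroHom.coe_mk] at hprod
  rw [hprod, ← Multiset.card_map (‖·‖₊)]
  refine Multiset.prod_le_pow_card _ _ fun x hx => ?_
  obtain ⟨r, hr, rfl⟩ := Multiset.mem_map.1 hx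
  exact spectrum.norm_le_norm_of_mem
    (A.mem_spectrum_iff_isRoot_charpoly.2 (Polynomial.isRoot_of_mem_roots hr))

theorem transferProd_append (E : ℂ) (u v : List ℝ) :
    transferProd E (u ++ v) = transferProd E v * transferProd E u := by
  simp [transferProd]

theorem det_transferMat (E : ℂ) (x : ℝ) : (transferMat E x).det = 1 := by
  simp [transferMat, Matrix.det_fin_two_of]

theorem det_transferProd (E : ℂ) (w : List ℝ) : (transferProd E w).det = 1 := by
  rw [transferProd, ← Matrix.coe_detMonoidHom, map_list_prod]
  simp [Function.comp_def, det_transferMat]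

theorem one_le_opNorm_transferProd (E : ℂ) (w : List ℝ) : 1 ≤ opNorm (transferProd E w) := by
  have h := (transferProd E w).nnnorm_det_le_l2_opNNNorm_pow
  rw [det_transferProd, nnnorm_one, Fintype.card_fin, one_le_pow_iff two_ne_zero] at h
  exact h

theorem log_opNorm_transferProd_append_le (E : ℂ) (u v : List ℝ) :
    Real.log (opNorm (transferProd E (u ++ v))) ≤
      Real.log (opNorm (transferProd E u)) + Real.log (opNorm (transferProd E v)) := by
  have hpos : ∀ w, 0 < opNorm (transferProd E w) :=
    fun w => one_pos.trans_le (one_le_opNorm_transferProd E w)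
  rw [← Real.log_mul (hpos u).ne' (hpos v).ne']
  refine Real.log_le_log (hpos _) ?_
  rw [transferProd_append, mul_comm (opNorm _)]
  exact norm_mul_le (transferProd E v) (transferProd E u)

theorem exists_le_mul_add_of_tendsto_div {u : ℕ → ℝ} {γ : ℝ}
    (h : Tendsto (fun n => u n / n) atTop (𝓝 γ)) {δ : ℝ} (hδ : 0 < δ) :
    ∃ C, 0 ≤ C ∧ ∀ n, u n ≤ (γ + δ) * n + C := by
  have hev : ∀ᶠ n : ℕ in atTop, u n - (γ + δ) * n ≤ 0 := by
    filter_upwards [h.eventually (gt_mem_nhds (lt_add_of_pos_right γ hδ)),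
      eventually_gt_atTop 0] with n hn hn0
    rw [div_lt_iff₀ (Nat.cast_pos.2 hn0)] at hn
    linarith
  obtain ⟨C, hC⟩ := (isBoundedUnder_of_eventually_le hev).bddAbove_range
  exact ⟨max C 0, le_max_right _ _, fun n => by linarith [hC ⟨n, rfl⟩, le_max_left C 0]⟩

section Language

variable {α : Type*}

def IsFactorial (W : Set (List α)) : Prop :=
  ∀ u w : List α, w ∈ W → u <:+: w → u ∈ W

def maxOnLength (W : Set (List α)) (F : List α → ℝ) (n : ℕ) : ℝ :=
  sSup (F '' {v | v ∈ W ∧ v.length = n})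

theorem finite_setOf_mem_length_eq {A : Set α} (hA : A.Finite) {W : Set (List α)}
    (hWA : ∀ w ∈ W, ∀ x ∈ w, x ∈ A) (n : ℕ) : {v | v ∈ W ∧ v.length = n}.Finite := by
  have := hA.to_subtype
  refine ((List.finite_length_eq A n).image (List.map Subtype.val)).subset ?_
  rintro v ⟨hv, rfl⟩
  lift v to List A using hWA v hv
  exact ⟨v, by simp, rfl⟩

variable {W : Set (List α)} {F : List α → ℝ}

theorem le_maxOnLength (hfin : ∀ n, {v | v ∈ W ∧ v.length = n}.Finite) {v : List α}
    (hv : v ∈ W) : F v ≤ maxOnLength W F v.length :=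
  le_csSup ((hfin _).image F).bddAbove ⟨v, ⟨hv, rfl⟩, rfl⟩

theorem exists_eq_maxOnLength (hfin : ∀ n, {v | v ∈ W ∧ v.length = n}.Finite)
    (hne : ∀ n, ∃ v ∈ W, v.length = n) (n : ℕ) :
    ∃ v ∈ W, v.length = n ∧ F v = maxOnLength W F n := by
  obtain ⟨v, hv, hvn⟩ := hne n
  have hne' : {v | v ∈ W ∧ v.length = n}.Nonempty := ⟨v, hv, hvn⟩
  obtain ⟨u, ⟨hu, hun⟩, hmax⟩ := (hne'.image F).csSup_mem ((hfin n).image F)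
  exact ⟨u, hu, hun, hmax⟩

theorem subadditive_maxOnLength (hW : IsFactorial W) (hF : ∀ u v, F (u ++ v) ≤ F u + F v)
    (hfin : ∀ n, {v | v ∈ W ∧ v.length = n}.Finite) (hne : ∀ n, ∃ v ∈ W, v.length = n) :
    Subadditive (maxOnLength W F) := by
  intro m n
  obtain ⟨w, hw, hwlen, hFw⟩ := exists_eq_maxOnLength (F := F) hfin hne (m + n)
  have htake := le_maxOnLength (F := F) hfin (hW _ _ hw (w.take_prefix m).isInfix)
  have hdrop := le_maxOnLength (F := F) hfin (hW _ _ hw (w.drop_suffix m).isInfix)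
  rw [List.length_take, hwlen, min_eq_left (Nat.le_add_right m n)] at htake
  rw [List.length_drop, hwlen, Nat.add_sub_cancel_left] at hdrop
  calc maxOnLength W F (m + n) = F (w.take m ++ w.drop m) := by rw [List.take_append_drop, hFw]
    _ ≤ F (w.take m) + F (w.drop m) := hF _ _
    _ ≤ _ := add_le_add htake hdrop

/-- Peeling off the first occurrence of `v` in each window of length `L` splits `u` as
`p₀ v p₁ v ⋯ v pₖ` with gaps of length at most `L`. -/
theorem IsFactorial.exists_le_mul_add (hW : IsFactorial W) {G : List α → ℝ}
    (hG : ∀ u v, G (u ++ v) ≤ G u + G v) {v : List α} (hv : v ≠ []) {L : ℕ}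
    (hcover : ∀ w ∈ W, w.length = L → v <:+: w) {H : ℝ}
    (hH : ∀ p ∈ W, p.length ≤ L → G p ≤ H) (u : List α) (hu : u ∈ W) :
    ∃ k : ℕ, u.length ≤ (k + 1) * L ∧ G u ≤ k * G v + (k + 1) * H := by
  induction hn : u.length using Nat.strong_induction_on generalizing u with
  | _ n ih =>
  subst hn
  rcases lt_or_ge u.length L with hshort | hlong
  · exact ⟨0, by omega, by simpa using hH u hu hshort.le⟩
  obtain ⟨p, s, hps⟩ := hcover _ (hW _ _ hu (u.take_prefix L).isInfix) (by simp [hlong])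
  have hpv : p.length + v.length ≤ L := by
    have := congrArg List.length hps
    simp only [List.length_append, List.length_take, min_eq_left hlong] at this
    omega
  obtain ⟨r, hu_eq⟩ : ∃ r, u = p ++ v ++ r :=
    ⟨s ++ u.drop L, by rw [← List.append_assoc, hps, List.take_append_drop]⟩
  have hu_len : u.length = p.length + v.length + r.length := by simp [hu_eq, Nat.add_assoc]
  have hv_len : 0 < v.length := List.length_pos_iff.2 hv
  have hp : G p ≤ H := hH p (hW _ _ hu ⟨[], v ++ r, by simp [hu_eq]⟩) (by omega)
  obtain ⟨k, hkL, hkG⟩ := ih r.length (by omega) r (hW _ _ hu ⟨p ++ v, [], by simp [hu_eq]⟩) rfl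
  refine ⟨k + 1, by rw [hu_len]; nlinarith, ?_⟩
  calc G u ≤ G p + G v + G r := by
        rw [hu_eq]; exact (hG _ _).trans (add_le_add_left (hG _ _) _)
    _ ≤ H + G v + (k * G v + (k + 1) * H) := by gcongr
    _ = ((k + 1 : ℕ) : ℝ) * G v + ((k + 1 : ℕ) + 1) * H := by push_cast; ring

theorem mul_length_sub_le_of_linearlyRepetitive (hW : IsFactorial W)
    (hF : ∀ u v, F (u ++ v) ≤ F u + F v) (hfin : ∀ n, {v | v ∈ W ∧ v.length = n}.Finite)
    (hne : ∀ n, ∃ v ∈ W, v.length = n) {c : ℝ} (hc : 0 < c)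
    (hlr : ∀ u ∈ W, u ≠ [] → ∀ w ∈ W, c * u.length ≤ w.length → u <:+: w)
    {γ δ C : ℝ} (hγ : ∀ n ≠ 0, γ * n ≤ maxOnLength W F n) (hδ : 0 ≤ δ) (hC : 0 ≤ C)
    (hbound : ∀ n, maxOnLength W F n ≤ (γ + δ) * n + C) {v : List α} (hv : v ∈ W)
    (hv0 : v ≠ []) : γ * v.length - 2 * (δ * ⌈c * v.length⌉₊ + C) ≤ F v := by
  set L := ⌈c * v.length⌉₊
  have hL : 0 < L := Nat.ceil_pos.2 (mul_pos hc (by exact_mod_cast List.length_pos_iff.2 hv0))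
  set G : List α → ℝ := fun u => F u - γ * u.length
  have hG : ∀ u v, G (u ++ v) ≤ G u + G v := fun u v => by
    simp only [G, List.length_append, Nat.cast_add]
    linarith [hF u v]
  have hH : ∀ p ∈ W, p.length ≤ L → G p ≤ δ * L + C := fun p hp hpL => by
    have hpL' : (p.length : ℝ) ≤ L := by exact_mod_cast hpL
    have := (le_maxOnLength (F := F) hfin hp).trans (hbound p.length)
    simp only [G]
    nlinarith
  have hcover : ∀ w ∈ W, w.length = L → v <:+: w := fun w hw hwL =>
    hlr v hv hv0 w hw (hwL ▸ Nat.le_ceil _)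
  obtain ⟨u, hu, hulen, hFu⟩ := exists_eq_maxOnLength (F := F) hfin hne (2 * L)
  obtain ⟨k, hkL, hGu⟩ := hW.exists_le_mul_add hG hv0 hcover hH u hu
  have hk : (1 : ℝ) ≤ k := by
    have : 2 ≤ k + 1 := Nat.le_of_mul_le_mul_right (hulen ▸ hkL) hL
    exact_mod_cast (by omega : 1 ≤ k)
  have hGu0 : 0 ≤ G u := by
    have := hγ (2 * L) (by omega)
    simp only [G]
    rw [hulen, hFu]
    linarith
  have hH0 : 0 ≤ δ * L + C := by positivity
  simp only [G] at hGu
  nlinarith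

theorem exists_forall_lt_div_length (hW : IsFactorial W)
    (hF : ∀ u v, F (u ++ v) ≤ F u + F v) (hfin : ∀ n, {v | v ∈ W ∧ v.length = n}.Finite)
    (hne : ∀ n, ∃ v ∈ W, v.length = n) {c : ℝ} (hc : 0 < c)
    (hlr : ∀ u ∈ W, u ≠ [] → ∀ w ∈ W, c * u.length ≤ w.length → u <:+: w)
    {γ : ℝ} (hγ : ∀ n ≠ 0, γ * n ≤ maxOnLength W F n)
    (hlim : Tendsto (fun n => maxOnLength W F n / n) atTop (𝓝 γ)) {γ' : ℝ} (hγ' : γ' < γ) :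
    ∃ N : ℕ, ∀ v ∈ W, N ≤ v.length → γ' < F v / v.length := by
  set ε := γ - γ'
  have hε : 0 < ε := sub_pos.2 hγ'
  set δ := ε / (4 * c)
  have hδ : 0 < δ := by positivity
  have hδc : δ * c = ε / 4 := by simp only [δ]; field_simp
  obtain ⟨C, hC0, hC⟩ := exists_le_mul_add_of_tendsto_div hlim hδ
  obtain ⟨N, hN⟩ := exists_nat_gt (4 * (δ + C) / ε)
  refine ⟨N, fun v hv hvN => ?_⟩
  have hNv : 4 * (δ + C) < ε * v.length :=
    (div_lt_iff₀' hε).1 (hN.trans_le (Nat.cast_le.2 hvN))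
  have hv_len : (0 : ℝ) < v.length := by nlinarith
  have hlow := mul_length_sub_le_of_linearlyRepetitive hW hF hfin hne hc hlr hγ hδ.le hC0 hC hv
    (List.ne_nil_of_length_pos (by exact_mod_cast hv_len))
  have hceil : δ * ⌈c * v.length⌉₊ ≤ ε / 4 * v.length + δ := by
    rw [← hδc]
    nlinarith [Nat.ceil_lt_add_one (mul_pos hc hv_len).le]
  rw [lt_div_iff₀ hv_len]
  linarith

theorem exists_tendsto_div_length (hW : IsFactorial W) (hF : ∀ u v, F (u ++ v) ≤ F u + F v)
    (hF0 : ∀ v, 0 ≤ F v) (hfin : ∀ n, {v | v ∈ W ∧ v.length = n}.Finite)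
    (hne : ∀ n, ∃ v ∈ W, v.length = n)
    (hlr : ∃ c : ℝ, 1 ≤ c ∧ ∀ u ∈ W, u ≠ [] → ∀ w ∈ W, c * u.length ≤ w.length → u <:+: w) :
    ∃ γ, Tendsto (fun v => F v / v.length) (comap List.length atTop ⊓ 𝓟 W) (𝓝 γ) := by
  obtain ⟨c, hc, hlr⟩ := hlr
  have hsub := subadditive_maxOnLength hW hF hfin hne
  have hbdd : BddBelow (Set.range fun n => maxOnLength W F n / n) := by
    refine ⟨0, Set.forall_mem_range.2 fun n => div_nonneg ?_ n.cast_nonneg⟩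
    obtain ⟨v, -, -, hv⟩ := exists_eq_maxOnLength (F := F) hfin hne n
    exact hv ▸ hF0 v
  have hlim := hsub.tendsto_lim hbdd
  have hγ : ∀ n ≠ 0, hsub.lim * n ≤ maxOnLength W F n := fun n hn =>
    (le_div_iff₀ (Nat.cast_pos.2 (Nat.pos_of_ne_zero hn))).1 (hsub.lim_le_div hbdd hn)
  have hlen : Tendsto List.length (comap List.length atTop ⊓ 𝓟 W) atTop :=
    tendsto_comap.mono_left inf_le_left
  have hmem : ∀ᶠ v in comap List.length atTop ⊓ 𝓟 W, v ∈ W :=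
    mem_inf_of_right (mem_principal_self W)
  refine ⟨hsub.lim, tendsto_order.2 ⟨fun γ' hγ' => ?_, fun γ' hγ' => ?_⟩⟩
  · obtain ⟨N, hN⟩ :=
      exists_forall_lt_div_length hW hF hfin hne (one_pos.trans_le hc) hlr hγ hlim hγ'
    filter_upwards [hmem, hlen.eventually_ge_atTop N] with v hv hvN using hN v hv hvN
  · filter_upwards [hmem, hlen.eventually (hlim.eventually (gt_mem_nhds hγ'))] with v hv hlt
    exact (div_le_div_of_nonneg_right (le_maxOnLength hfin hv) v.length.cast_nonneg).trans_lt hlt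

end Language

/-- Theorem 5.2, existence of the Lyapunov exponent. Let `A ⊂ ℝ` be a
finite alphabet and `W` a factorial, linearly repetitive language over `A` containing
words of every length. Then for every `E ∈ ℂ` there is `γ(E) ∈ ℝ` such that
`(1/|w_n|)·ln‖M(E)(w_n)‖ → γ(E)` along every sequence `(w_n)` in `W` with
`|w_n| → ∞`. -/
theorem lyapunov_exists (A : Finset ℝ) (W : Set (List ℝ))
    (hA : ∀ w ∈ W, ∀ x ∈ w, x ∈ A)
    (hfactorial : ∀ u w : List ℝ, w ∈ W → u <:+: w → u ∈ W)
    (hlengths : ∀ n : ℕ, ∃ w ∈ W, w.length = n)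
    (hlr : ∃ c : ℝ, 1 ≤ c ∧ ∀ u ∈ W, u ≠ [] → ∀ w ∈ W,
      c * (u.length : ℝ) ≤ (w.length : ℝ) → u <:+: w)
    (E : ℂ) :
    ∃ γ : ℝ, ∀ w : ℕ → List ℝ, (∀ n, w n ∈ W) →
      Tendsto (fun n => (w n).length) atTop atTop →
      Tendsto (fun n => Real.log (opNorm (transferProd E (w n))) / ((w n).length : ℝ))
        atTop (nhds γ) := by
  obtain ⟨γ, hγ⟩ := exists_tendsto_div_length hfactorial (log_opNorm_transferProd_append_le E)
    (fun v => Real.log_nonneg (one_le_opNorm_transferProd E v))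
    (finite_setOf_mem_length_eq A.finite_toSet hA) hlengths hlr
  exact ⟨γ, fun w hw hlen => hγ.comp (tendsto_inf.2
    ⟨tendsto_comap_iff.2 hlen, tendsto_principal.2 (.of_forall hw)⟩)⟩

end
end

section
/- There exist a sequence (a_n)_{n≥1} of positive integers (equivalently, an irrational α ∈ (0,1) with these continued fraction coefficients), a subadditive function F : 𝒲 → ℝ on the associated set 𝒲 of Sturmian words, and sequences (w_n^1)_{n∈ℕ} and (w_n^2)_{n∈ℕ} in 𝒲 with |w_n^1| → ∞ and |w_n^2| → ∞ such that limsup_{n→∞} F(w_n^1)/|w_n^1| < liminf_{n→∞} F(w_n^2)/|w_n^2|. In particular, the limit of F(w)/|w| as |w| → ∞ along 𝒲 does not exist, i.e. the uniform subadditive ergodic theorem fails for 𝒲. -/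
open Filter

noncomputable section

/-!
Take `a_n = 2^(n+1)` and let `U_j` (`rareWord a j`; recall `st a n = s_{n-1}`) be
`s_{j+2}^(a_{j+3}+1)` followed by `s_{j+2} s_{j+1}` without its last two letters. The words
`s_{j+2} s_{j+1}` and `s_{j+1} s_{j+2}` differ exactly in their last two letters, so `U_j` has
period `|s_{j+2}|`, whereas each factor `s_{j+3} s_{j+2}` of `s_{j+4} = s_{j+3}^(a_{j+4}) s_{j+2}`
starting at a block `s_{j+3}` has two letters at distance `|s_{j+2}|` that differ. Hence `U_j`
does not occur in `s_{j+4}`, although it occurs in `s_{j+5}`.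

Let `G(w)` be the largest total length of disjoint occurrences of the words `U_j` in `w`. It is
superadditive and at most `|w|`, so `F(w) = |w| - G(w)` is subadditive, and `F(U_j) = 0`.
Splitting along `s_n = s_{n-1}^(a_n) s_{n-2}`, where at most one occurrence straddles each cut,
`s_n` holds at most `2|s_n| / |s_{j+4}|` disjoint copies of `U_j`. As
`|U_j| ≤ 3|s_{j+3}| ≤ 3|s_{j+4}| / a_{j+4}`, this gives `G(s_n) ≤ 6|s_n| Σ_j 1/a_{j+4} = 3|s_n|/8`,
so `F(s_n)/|s_n| ≥ 5/8` along the words `s_n`, against `0` along the words `U_j`.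
-/

section Occurrences

open List

variable {α : Type*}

def IsInfixAt (u w : List α) (i : ℕ) : Prop :=
  ∃ s t, s ++ u ++ t = w ∧ s.length = i

variable {u w x y : List α} {i : ℕ}

lemma isInfixAt_self (u : List α) : IsInfixAt u u 0 := ⟨[], [], by simp, rfl⟩

lemma IsInfixAt.add_length_le (h : IsInfixAt u w i) : i + u.length ≤ w.length := by
  obtain ⟨s, t, rfl, rfl⟩ := h
  simp

lemma IsInfixAt.getElem? (h : IsInfixAt u w i) {k : ℕ} (hk : k < u.length) :
    w[i + k]? = u[k]? := by
  obtain ⟨s, t, rfl, rfl⟩ := h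
  rw [List.append_assoc, getElem?_append_right (by omega), Nat.add_sub_cancel_left,
    getElem?_append_left hk]

lemma IsInfixAt.trans_isPrefix (h : IsInfixAt u x i) (hx : x <+: w) : IsInfixAt u w i := by
  obtain ⟨s, t, rfl, rfl⟩ := h
  obtain ⟨r, rfl⟩ := hx
  exact ⟨s, t ++ r, by simp, rfl⟩

lemma IsInfixAt.append_left (h : IsInfixAt u y i) (x : List α) :
    IsInfixAt u (x ++ y) (x.length + i) := by
  obtain ⟨s, t, rfl, rfl⟩ := h
  exact ⟨x ++ s, t, by simp, by simp⟩

lemma IsInfixAt.of_append_of_add_length_le (h : IsInfixAt u (x ++ y) i)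
    (hi : i + u.length ≤ x.length) : IsInfixAt u x i := by
  obtain ⟨s, t, hst, rfl⟩ := h
  refine ⟨s, t.take (x.length - (s ++ u).length), ?_, rfl⟩
  have hsu : (s ++ u).length ≤ x.length := by simpa using hi
  calc s ++ u ++ t.take (x.length - (s ++ u).length)
      = (s ++ u ++ t).take x.length := by rw [take_append, take_of_length_le hsu]
    _ = x := by rw [hst, take_left]

lemma IsInfixAt.of_append_of_length_le (h : IsInfixAt u (x ++ y) i) (hi : x.length ≤ i) :
    IsInfixAt u y (i - x.length) := by
  obtain ⟨s, t, hst, rfl⟩ := h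
  refine ⟨s.drop x.length, t, ?_, by simp⟩
  calc s.drop x.length ++ u ++ t = (s ++ (u ++ t)).drop x.length := by
        rw [drop_append_of_le_length hi, List.append_assoc]
    _ = y := by rw [← List.append_assoc, hst, drop_left]

lemma IsInfixAt.getElem?_add_eq_of_hasPeriod (h : IsInfixAt u w i) {p : ℕ} (hu : u.HasPeriod p)
    {t : ℕ} (hit : i ≤ t) (ht : t + p < i + u.length) : w[t + p]? = w[t]? := by
  have e₁ : t = i + (t - i) := by omega
  have e₂ : t + p = i + (t - i + p) := by omega
  rw [e₂, h.getElem? (by omega), e₁, h.getElem? (by omega), Nat.add_sub_cancel_left]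
  exact ((hasPeriod_iff_getElem?.1 hu) (t - i) (by omega)).symm

end Occurrences

section Powers

variable (x y : List Bool)

lemma wpow_add (k l : ℕ) : wpow x (k + l) = wpow x k ++ wpow x l := by
  induction k with
  | zero => simp [wpow]
  | succ k ih => rw [Nat.succ_add, wpow, ih, wpow, List.append_assoc]

lemma wpow_succ' (k : ℕ) : wpow x (k + 1) = wpow x k ++ x := by
  rw [wpow_add]
  simp [wpow]

lemma append_wpow_comm (k : ℕ) : x ++ wpow x k = wpow x k ++ x :=
  wpow_succ' x k

@[simp] lemma length_wpow (k : ℕ) : (wpow x k).length = k * x.length := by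
  induction k with
  | zero => simp [wpow]
  | succ k ih => simp [wpow, ih, Nat.succ_mul, Nat.add_comm]

lemma hasPeriod_wpow (k : ℕ) : (wpow x k).HasPeriod x.length := by
  rw [List.HasPeriod]
  cases k with
  | zero => simp [wpow]
  | succ k =>
    rw [show (wpow x (k + 1)).take x.length = x from List.take_left, append_wpow_comm]
    exact List.prefix_append _ _

variable {x y}

lemma List.IsPrefix.prefix_wpow_append (h : x <+: y) (k : ℕ) : x <+: wpow y k ++ x := by
  cases k with
  | zero => simp [wpow]
  | succ k => exact h.trans (by rw [wpow, List.append_assoc]; exact List.prefix_append _ _)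

end Powers

section Packings

open Finset

variable {α ι : Type*}

def DisjointOccurrences (u w : List α) (I : Finset ℕ) : Prop :=
  (∀ i ∈ I, IsInfixAt u w i) ∧
    (I : Set ℕ).Pairwise fun i i' => i + u.length ≤ i' ∨ i' + u.length ≤ i

variable {u x y : List α} {I : Finset ℕ}

/-- Of a family of disjoint occurrences in `x ++ y`, at most one straddles the cut. -/
lemma DisjointOccurrences.exists_split (hI : DisjointOccurrences u (x ++ y) I) :
    ∃ I₁ I₂, DisjointOccurrences u x I₁ ∧ DisjointOccurrences u y I₂ ∧
      #I ≤ #I₁ + #I₂ + 1 := by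
  classical
  set I₁ := I.filter (· + u.length ≤ x.length)
  set I₂ := I.filter (x.length ≤ ·)
  set C := I.filter fun i => x.length < i + u.length ∧ i < x.length
  refine ⟨I₁, I₂.image (· - x.length), ⟨?_, hI.2.mono (by simp [I₁, Set.ofPred_and])⟩, ⟨?_, ?_⟩, ?_⟩
  · intro i hi
    rw [mem_filter] at hi
    exact (hI.1 i hi.1).of_append_of_add_length_le hi.2
  · simp only [mem_image, mem_filter, I₂]
    rintro _ ⟨i, ⟨hi, hxi⟩, rfl⟩
    exact (hI.1 i hi).of_append_of_length_le hxi
  · simp only [coe_image, coe_filter, I₂]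
    rintro _ ⟨i, ⟨hi, hxi⟩, rfl⟩ _ ⟨i', ⟨hi', hxi'⟩, rfl⟩ hne
    have := hI.2 hi hi' (fun h => hne (h ▸ rfl))
    simp only at this ⊢
    omega
  · have hcover : I ⊆ I₁ ∪ I₂ ∪ C := by
      intro i hi
      simp only [mem_union, mem_filter, I₁, I₂, C, hi, true_and]
      omega
    have hC : #C ≤ 1 := by
      refine card_le_one.2 fun i hi i' hi' => ?_
      simp only [mem_filter, C] at hi hi'
      by_contra hne
      have := hI.2 hi.1 hi'.1 hne
      omega
    have himage : #(I₂.image (· - x.length)) = #I₂ := by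
      refine card_image_of_injOn fun i hi i' hi' h => ?_
      simp only [coe_filter, I₂, Set.mem_ofPred_eq] at hi hi'
      omega
    calc #I ≤ #(I₁ ∪ I₂ ∪ C) := card_le_card hcover
      _ ≤ #I₁ + #I₂ + #C := (card_union_le _ _).trans (by gcongr; exact card_union_le _ _)
      _ ≤ _ := by omega

lemma DisjointOccurrences.eq_empty (hI : DisjointOccurrences u y I)
    (h : ∀ i, ¬ IsInfixAt u y i) : I = ∅ :=
  eq_empty_of_forall_notMem fun i hi => h i (hI.1 i hi)

lemma DisjointOccurrences.card_add_one_mul_le_of_append {D X Y : ℕ}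
    (hx : ∀ J, DisjointOccurrences u x J → (#J + 1) * D ≤ X)
    (hy : ∀ J, DisjointOccurrences u y J → (#J + 1) * D ≤ Y)
    (hI : DisjointOccurrences u (x ++ y) I) : (#I + 1) * D ≤ X + Y := by
  obtain ⟨I₁, I₂, h₁, h₂, hcard⟩ := hI.exists_split
  calc (#I + 1) * D ≤ (#I₁ + 1) * D + (#I₂ + 1) * D := by
        rw [← add_mul]; exact Nat.mul_le_mul_right _ (by omega)
    _ ≤ X + Y := add_le_add (hx _ h₁) (hy _ h₂)

lemma DisjointOccurrences.card_add_one_mul_le_of_wpow_append {u x y : List Bool} {D X Y : ℕ}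
    (hx : ∀ J, DisjointOccurrences u x J → (#J + 1) * D ≤ X)
    (hy : ∀ J, DisjointOccurrences u y J → (#J + 1) * D ≤ Y) (k : ℕ) {I : Finset ℕ}
    (hI : DisjointOccurrences u (wpow x k ++ y) I) : (#I + 1) * D ≤ k * X + Y := by
  induction k generalizing I with
  | zero => simpa using hy I (by simpa [wpow] using hI)
  | succ k ih =>
    rw [wpow, List.append_assoc] at hI
    calc (#I + 1) * D ≤ X + (k * X + Y) := hI.card_add_one_mul_le_of_append hx fun J hJ => ih hJ
      _ = (k + 1) * X + Y := by ring

def IsPacking (U : ι → List α) (w : List α) (P : Finset (ℕ × ι)) : Prop :=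
  (∀ q ∈ P, IsInfixAt (U q.2) w q.1) ∧
    (P : Set (ℕ × ι)).Pairwise fun q q' =>
      q.1 + (U q.2).length ≤ q'.1 ∨ q'.1 + (U q'.2).length ≤ q.1

def coverage (U : ι → List α) (P : Finset (ℕ × ι)) : ℕ :=
  ∑ q ∈ P, (U q.2).length

variable {U : ι → List α} {w : List α} {P : Finset (ℕ × ι)}

lemma IsPacking.coverage_le_length (hP : IsPacking U w P) : coverage U P ≤ w.length := by
  classical
  let block : ℕ × ι → Finset ℕ := fun q => Ico q.1 (q.1 + (U q.2).length)
  have hdisj : (P : Set (ℕ × ι)).PairwiseDisjoint block := by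
    intro q hq q' hq' hne
    rw [Function.onFun, disjoint_left]
    intro k hk hk'
    simp only [mem_Ico, block] at hk hk'
    have := hP.2 hq hq' hne
    omega
  have hsub : P.biUnion block ⊆ range w.length := by
    intro k hk
    obtain ⟨q, hq, hk⟩ := mem_biUnion.1 hk
    have := (hP.1 q hq).add_length_le
    simp only [mem_Ico, block] at hk
    simp only [mem_range]
    omega
  calc coverage U P = #(P.biUnion block) := by
        rw [card_biUnion hdisj]
        exact sum_congr rfl fun q _ => by simp [block]
    _ ≤ w.length := (card_le_card hsub).trans_eq (card_range _)

lemma IsPacking.disjointOccurrences_fiber [DecidableEq ι] (hP : IsPacking U w P) (j : ι) :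
    DisjointOccurrences (U j) w ((P.filter (·.2 = j)).image Prod.fst) ∧
      #((P.filter (·.2 = j)).image Prod.fst) = #(P.filter (·.2 = j)) := by
  refine ⟨⟨?_, ?_⟩, card_image_of_injOn ?_⟩
  · simp only [mem_image, mem_filter]
    rintro _ ⟨q, ⟨hq, rfl⟩, rfl⟩
    exact hP.1 q hq
  · simp only [coe_image, coe_filter]
    rintro _ ⟨q, ⟨hq, rfl⟩, rfl⟩ _ ⟨q', ⟨hq', hq'j⟩, rfl⟩ hne
    simpa only [hq'j] using hP.2 hq hq' (fun h => hne (h ▸ rfl))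
  · simp only [coe_filter]
    rintro q ⟨-, hq⟩ q' ⟨-, hq'⟩ h
    exact Prod.ext h (hq.trans hq'.symm)

end Packings

section Coverage

open Finset

variable {α ι : Type*} {U : ι → List α} {x y w : List α} {P : Finset (ℕ × ι)}

lemma IsPacking.append {P₁ P₂ : Finset (ℕ × ι)} (h₁ : IsPacking U x P₁) (h₂ : IsPacking U y P₂) :
    ∃ P, IsPacking U (x ++ y) P ∧ coverage U P = coverage U P₁ + coverage U P₂ := by
  classical
  let shift : ℕ × ι ↪ ℕ × ι :=
    ⟨fun q => (x.length + q.1, q.2), fun q q' h => by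
      simp only [Prod.mk.injEq, add_right_inj] at h; exact Prod.ext h.1 h.2⟩
  set Q := P₂.map shift
  have hleft : ∀ q ∈ P₁, q.1 + (U q.2).length ≤ x.length := fun q hq =>
    (h₁.1 q hq).add_length_le
  have hright : ∀ q ∈ Q, x.length ≤ q.1 := fun q hq => by
    obtain ⟨q, -, rfl⟩ := mem_map.1 hq
    exact Nat.le_add_right _ _
  refine ⟨P₁ ∪ Q, ⟨fun q hq => ?_, ?_⟩, ?_⟩
  · rcases mem_union.1 hq with hq | hq
    · exact (h₁.1 q hq).trans_isPrefix (List.prefix_append x y)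
    · obtain ⟨q', hq', rfl⟩ := mem_map.1 hq
      exact (h₂.1 q' hq').append_left x
  · rw [coe_union, Set.pairwise_union]
    refine ⟨h₁.2, ?_, fun q hq q' hq' _ =>
      ⟨Or.inl ((hleft q hq).trans (hright q' hq')), Or.inr ((hleft q hq).trans (hright q' hq'))⟩⟩
    rw [coe_map, shift.injective.injOn.pairwise_image]
    intro q hq q' hq' hne
    have := h₂.2 hq hq' hne
    change x.length + q.1 + (U q.2).length ≤ x.length + q'.1 ∨
      x.length + q'.1 + (U q'.2).length ≤ x.length + q.1
    omega
  · -- a word counted in both `P₁` and `Q` is empty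
    have hinter : ∑ q ∈ P₁ ∩ Q, (U q.2).length = 0 := sum_eq_zero fun q hq => by
      have := hleft q (mem_inter.1 hq).1
      have := hright q (mem_inter.1 hq).2
      omega
    have hunion := sum_union_inter (s₁ := P₁) (s₂ := Q) (f := fun q => (U q.2).length)
    rw [hinter, add_zero, sum_map] at hunion
    exact hunion

def maxCoverage (U : ι → List α) (w : List α) : ℕ :=
  sSup {c | ∃ P, IsPacking U w P ∧ coverage U P = c}

lemma bddAbove_coverage (U : ι → List α) (w : List α) :
    BddAbove {c | ∃ P, IsPacking U w P ∧ coverage U P = c} := by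
  refine ⟨w.length, ?_⟩
  rintro _ ⟨P, hP, rfl⟩
  exact hP.coverage_le_length

lemma exists_isPacking_coverage_eq_maxCoverage (U : ι → List α) (w : List α) :
    ∃ P, IsPacking U w P ∧ coverage U P = maxCoverage U w := by
  refine Nat.sSup_mem ?_ (bddAbove_coverage U w)
  exact ⟨0, ∅, ⟨by simp, by simp⟩, by simp [coverage]⟩

lemma IsPacking.coverage_le_maxCoverage (hP : IsPacking U w P) :
    coverage U P ≤ maxCoverage U w :=
  le_csSup (bddAbove_coverage U w) ⟨P, hP, rfl⟩

lemma maxCoverage_le_length : maxCoverage U w ≤ w.length := by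
  obtain ⟨P, hP, hcov⟩ := exists_isPacking_coverage_eq_maxCoverage U w
  exact hcov ▸ hP.coverage_le_length

lemma maxCoverage_self (j : ι) : maxCoverage U (U j) = (U j).length := by
  refine le_antisymm maxCoverage_le_length ?_
  have hP : IsPacking U (U j) {(0, j)} := ⟨by simpa using isInfixAt_self (U j), by simp⟩
  simpa [coverage] using hP.coverage_le_maxCoverage

lemma maxCoverage_add_maxCoverage_le_append :
    maxCoverage U x + maxCoverage U y ≤ maxCoverage U (x ++ y) := by
  obtain ⟨P₁, h₁, hcov₁⟩ := exists_isPacking_coverage_eq_maxCoverage U x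
  obtain ⟨P₂, h₂, hcov₂⟩ := exists_isPacking_coverage_eq_maxCoverage U y
  obtain ⟨P, hP, hcov⟩ := h₁.append h₂
  rw [← hcov₁, ← hcov₂, ← hcov]
  exact hP.coverage_le_maxCoverage

lemma wordSubadditive_length_sub_maxCoverage (U : ι → List Bool) (W : Set (List Bool)) :
    WordSubadditive W fun w => (w.length : ℝ) - maxCoverage U w := by
  refine ⟨fun u v _ _ _ => ?_, 1, zero_le_one, fun w _ => ?_⟩
  · have : (maxCoverage U u : ℝ) + maxCoverage U v ≤ maxCoverage U (u ++ v) := by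
      exact_mod_cast maxCoverage_add_maxCoverage_le_append
    push_cast [List.length_append]
    linarith
  · have : (maxCoverage U w : ℝ) ≤ w.length := by exact_mod_cast maxCoverage_le_length
    rw [abs_le]
    constructor <;> linarith [(maxCoverage U w).cast_nonneg (α := ℝ)]

lemma le_liminf_length_sub_maxCoverage_div {w : ℕ → List α} {c : ℝ} (hw : ∀ n, w n ≠ [])
    (hU : ∀ n, (maxCoverage U (w n) : ℝ) ≤ c * (w n).length) :
    1 - c ≤ liminf (fun n => ((w n).length - maxCoverage U (w n) : ℝ) / (w n).length) atTop := by
  have hpos (n : ℕ) : (0 : ℝ) < (w n).length := by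
    exact_mod_cast List.length_pos_iff.2 (hw n)
  have hle (n : ℕ) : ((w n).length - maxCoverage U (w n) : ℝ) / (w n).length ≤ 1 :=
    div_le_one_of_le₀ (by linarith [(maxCoverage U (w n)).cast_nonneg (α := ℝ)]) (hpos n).le
  refine le_liminf_of_le (isCoboundedUnder_ge_of_le _ hle) (.of_forall fun n => ?_)
  rw [le_div_iff₀ (hpos n)]
  linarith [hU n]

end Coverage

section Sturmian

variable {a : ℕ → ℕ}

lemma st_add_three (a : ℕ → ℕ) (n : ℕ) :
    st a (n + 3) = wpow (st a (n + 2)) (a (n + 2)) ++ st a (n + 1) := rfl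

lemma length_st_add_three (a : ℕ → ℕ) (n : ℕ) :
    (st a (n + 3)).length = a (n + 2) * (st a (n + 2)).length + (st a (n + 1)).length := by
  simp [st_add_three]

lemma length_st_pos (a : ℕ → ℕ) (n : ℕ) : 0 < (st a n).length := by
  match n with
  | 0 | 1 | 2 => simp [st]
  | n + 3 => rw [length_st_add_three]; have := length_st_pos a (n + 1); omega

lemma monotone_length_st (ha : ∀ n, 1 ≤ a n) : Monotone fun n => (st a n).length := by
  refine monotone_nat_of_le_succ fun n => ?_
  match n with
  | 0 | 1 => simp [st]
  | n + 2 =>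
    simp only [length_st_add_three]
    have := ha (n + 2)
    have := length_st_pos a (n + 1)
    nlinarith

lemma le_length_st (ha : ∀ n, 2 ≤ a n) (n : ℕ) : n ≤ (st a n).length := by
  match n with
  | 0 | 1 => simp [st]
  | 2 => simp [st]; have := ha 1; omega
  | n + 3 =>
    rw [length_st_add_three]
    have := le_length_st ha (n + 2)
    have := length_st_pos a (n + 1)
    have := ha (n + 2)
    nlinarith

lemma st_prefix_st_succ (ha : ∀ n, 2 ≤ a n) {k : ℕ} (hk : 1 ≤ k) : st a k <+: st a (k + 1) := by
  match k, hk with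
  | 1, _ =>
    obtain ⟨m, hm⟩ : ∃ m, a 1 - 1 = m + 1 := ⟨a 1 - 2, by have := ha 1; omega⟩
    simp [st, hm, wpow]
  | k + 2, _ =>
    obtain ⟨m, hm⟩ : ∃ m, a (k + 2) = m + 1 := ⟨a (k + 2) - 1, by have := ha (k + 2); omega⟩
    rw [st_add_three, hm, wpow, List.append_assoc]
    exact List.prefix_append _ _

lemma st_prefix_st (ha : ∀ n, 2 ≤ a n) {m n : ℕ} (hm : 1 ≤ m) (hmn : m ≤ n) :
    st a m <+: st a n := by
  induction n, hmn using Nat.le_induction with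
  | base => exact List.prefix_refl _
  | succ n hmn ih => exact ih.trans (st_prefix_st_succ ha (hm.trans hmn))

lemma exists_st_append_swap (a : ℕ → ℕ) (k : ℕ) : ∃ w x y, x ≠ y ∧
    st a (k + 2) ++ st a (k + 1) = w ++ [x, y] ∧ st a (k + 1) ++ st a (k + 2) = w ++ [y, x] := by
  induction k with
  | zero =>
    refine ⟨wpow [false] (a 1 - 1), true, false, by simp, by simp [st], ?_⟩
    rw [show st a 1 ++ st a 2 = wpow [false] (a 1 - 1 + 1) ++ [true] from rfl, wpow_succ']
    simp
  | succ k ih =>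
    obtain ⟨w, x, y, hxy, h₁, h₂⟩ := ih
    refine ⟨wpow (st a (k + 2)) (a (k + 2)) ++ w, y, x, hxy.symm, ?_, ?_⟩
    · rw [st_add_three, List.append_assoc, h₂, List.append_assoc]
    · rw [st_add_three, ← List.append_assoc, append_wpow_comm, List.append_assoc, h₁,
        List.append_assoc]

lemma st_append_getElem?_ne (k : ℕ) (hak : 1 ≤ a (k + 2)) :
    (st a (k + 3) ++ st a (k + 2))[(st a (k + 3)).length - 2]? ≠
      (st a (k + 3) ++ st a (k + 2))[(st a (k + 3)).length - 2 + (st a (k + 2)).length]? := by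
  obtain ⟨w, x, y, hxy, h₁, h₂⟩ := exists_st_append_swap a k
  obtain ⟨m, hm⟩ : ∃ m, a (k + 2) = m + 1 := ⟨a (k + 2) - 1, by omega⟩
  have hw := congrArg List.length h₁
  have hlen := length_st_add_three a k
  simp only [List.length_append, List.length_cons, List.length_nil] at hw
  have e₁ : st a (k + 3) ++ st a (k + 2) =
      wpow (st a (k + 2)) m ++ w ++ ([x, y] ++ st a (k + 2)) := by
    rw [st_add_three, hm, wpow_succ', List.append_assoc (wpow _ m), h₁]
    simp
  have e₂ : st a (k + 3) ++ st a (k + 2) = wpow (st a (k + 2)) (m + 1) ++ w ++ [y, x] := by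
    rw [st_add_three, hm, List.append_assoc, h₂, List.append_assoc]
  have p₁ : (st a (k + 3)).length - 2 = (wpow (st a (k + 2)) m ++ w).length := by
    simp only [List.length_append, length_wpow, hm] at hlen ⊢
    rw [Nat.succ_mul] at hlen
    omega
  have p₂ : (st a (k + 3)).length - 2 + (st a (k + 2)).length =
      (wpow (st a (k + 2)) (m + 1) ++ w).length := by
    simp only [List.length_append, length_wpow, hm] at hlen ⊢
    rw [Nat.succ_mul] at hlen ⊢
    omega
  rw [p₂, p₁]
  nth_rewrite 1 [e₁]
  rw [e₂, List.getElem?_append_right le_rfl, List.getElem?_append_right le_rfl]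
  simpa using hxy

lemma isInfixAt_st_append_st (ha : ∀ n, 2 ≤ a n) (k : ℕ) {d : ℕ} (hd : d < a (k + 2)) :
    IsInfixAt (st a (k + 2) ++ st a (k + 1)) (st a (k + 3)) (d * (st a (k + 2)).length) := by
  obtain ⟨e, he⟩ : ∃ e, a (k + 2) = d + 1 + e := ⟨a (k + 2) - d - 1, by omega⟩
  obtain ⟨r, hr⟩ := (st_prefix_st_succ ha (Nat.le_add_left 1 k)).prefix_wpow_append e
  refine ⟨wpow (st a (k + 2)) d, r, ?_, by simp⟩
  rw [st_add_three, he, wpow_add, wpow_add, List.append_assoc _ (wpow _ e), ← hr]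
  simp [wpow]

end Sturmian

section RareWord

variable {a : ℕ → ℕ}

def rareWord (a : ℕ → ℕ) (j : ℕ) : List Bool :=
  wpow (st a (j + 3)) (a (j + 3) + 1) ++ (st a (j + 3) ++ st a (j + 2)).dropLast.dropLast

lemma length_rareWord (a : ℕ → ℕ) (j : ℕ) :
    (rareWord a j).length + 2 = (st a (j + 4)).length + 2 * (st a (j + 3)).length := by
  have h₄ : (st a (j + 4)).length = a (j + 3) * (st a (j + 3)).length + (st a (j + 2)).length :=
    length_st_add_three a (j + 1)
  have := length_st_pos a (j + 2)
  have := length_st_pos a (j + 3)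
  simp only [rareWord, List.length_append, length_wpow, List.length_dropLast, h₄, Nat.succ_mul]
  omega

lemma dropLast_dropLast_st_append_st_prefix (j : ℕ) :
    (st a (j + 3) ++ st a (j + 2)).dropLast.dropLast <+: st a (j + 2) ++ st a (j + 3) := by
  obtain ⟨w, x, y, -, h₁, h₂⟩ := exists_st_append_swap a (j + 1)
  rw [h₁, h₂]
  simp

lemma rareWord_prefix_wpow (ha : ∀ n, 2 ≤ a n) (j : ℕ) :
    rareWord a j <+: wpow (st a (j + 3)) (a (j + 3) + 1 + 2) := by
  rw [rareWord, wpow_add _ (a (j + 3) + 1) 2]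
  refine (List.prefix_append_right_inj _).2 ?_
  calc (st a (j + 3) ++ st a (j + 2)).dropLast.dropLast
      <+: st a (j + 3) ++ st a (j + 2) :=
        (List.dropLast_prefix _).trans (List.dropLast_prefix _)
    _ <+: st a (j + 3) ++ st a (j + 3) :=
        (List.prefix_append_right_inj _).2 (st_prefix_st_succ ha (by omega))
    _ = wpow (st a (j + 3)) 2 := by simp [wpow]

lemma hasPeriod_rareWord (ha : ∀ n, 2 ≤ a n) (j : ℕ) :
    (rareWord a j).HasPeriod (st a (j + 3)).length :=
  (hasPeriod_wpow _ _).infix (rareWord_prefix_wpow ha j).isInfix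

lemma rareWord_infix_st (ha : ∀ n, 2 ≤ a n) (j : ℕ) : rareWord a j <:+: st a (j + 6) := by
  have h₄ : st a (j + 4) = wpow (st a (j + 3)) (a (j + 3)) ++ st a (j + 2) := st_add_three a (j + 1)
  have h₅ : st a (j + 5) = wpow (st a (j + 4)) (a (j + 4)) ++ st a (j + 3) := st_add_three a (j + 2)
  have h₆ : st a (j + 6) = wpow (st a (j + 5)) (a (j + 5)) ++ st a (j + 4) := st_add_three a (j + 3)
  obtain ⟨m, hm⟩ : ∃ m, a (j + 4) = m + 1 := ⟨a (j + 4) - 1, by have := ha (j + 4); omega⟩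
  obtain ⟨m', hm'⟩ : ∃ m, a (j + 5) = m + 2 := ⟨a (j + 5) - 2, by have := ha (j + 5); omega⟩
  obtain ⟨r, hr⟩ : st a (j + 3) <+: wpow (st a (j + 4)) m ++ st a (j + 3) :=
    (st_prefix_st_succ ha (by omega)).prefix_wpow_append m
  have hU : rareWord a j <+: st a (j + 3) ++ st a (j + 5) := by
    have : st a (j + 3) ++ st a (j + 5) =
        wpow (st a (j + 3)) (a (j + 3) + 1) ++ (st a (j + 2) ++ (st a (j + 3) ++ r)) := by
      rw [h₅, hm, wpow, List.append_assoc, ← hr, h₄]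
      simp [wpow]
    rw [this, rareWord]
    refine (List.prefix_append_right_inj _).2 ?_
    rw [← List.append_assoc]
    exact (dropLast_dropLast_st_append_st_prefix j).trans (List.prefix_append _ _)
  calc rareWord a j <:+: st a (j + 3) ++ st a (j + 5) := hU.isInfix
    _ <:+: wpow (st a (j + 4)) (a (j + 4)) ++ (st a (j + 3) ++ st a (j + 5)) :=
      (List.suffix_append _ _).isInfix
    _ = st a (j + 5) ++ st a (j + 5) := by rw [← List.append_assoc, ← h₅]
    _ <:+: st a (j + 6) := by
      rw [h₆, hm', wpow, wpow, ← List.append_assoc, List.append_assoc]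
      exact (List.prefix_append _ _).isInfix

lemma not_isInfixAt_rareWord_st (ha : ∀ n, 2 ≤ a n) (j i : ℕ) :
    ¬ IsInfixAt (rareWord a j) (st a (j + 5)) i := by
  intro hocc
  have hU := length_rareWord a j
  set p := (st a (j + 3)).length
  set L := (st a (j + 4)).length
  have h₅ : (st a (j + 5)).length = a (j + 4) * L + p := length_st_add_three a (j + 2)
  have hp : 2 ≤ p := (le_length_st ha (j + 3)).trans' (by omega)
  have hL : 2 ≤ L := (le_length_st ha (j + 4)).trans' (by omega)
  have hfit := hocc.add_length_le
  -- `d * L + (L - 2)` is the first position `≥ i` where `st a (j + 5)` breaks the period `p`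
  set d := (i + 1) / L
  have hdL : d * L ≤ i + 1 := Nat.div_mul_le_self _ _
  have hdL' : i + 1 < d * L + L := Nat.lt_div_mul_add (by omega)
  have hd : d < a (j + 4) := by
    by_contra! h
    have := Nat.mul_le_mul_right L h
    omega
  have hjunction : IsInfixAt (st a (j + 4) ++ st a (j + 3)) (st a (j + 5)) (d * L) :=
    isInfixAt_st_append_st ha (j + 2) hd
  have hdefect : (st a (j + 4) ++ st a (j + 3))[L - 2]? ≠
      (st a (j + 4) ++ st a (j + 3))[L - 2 + p]? :=
    st_append_getElem?_ne (j + 1) (one_le_two.trans (ha _))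
  have hper := hocc.getElem?_add_eq_of_hasPeriod (hasPeriod_rareWord ha j)
    (t := d * L + (L - 2)) (by omega) (by omega)
  rw [hjunction.getElem? (by simp; omega), Nat.add_assoc,
    hjunction.getElem? (by simp; omega)] at hper
  exact hdefect hper.symm

end RareWord

section Counting

open Finset

variable {a : ℕ → ℕ}

lemma not_isInfixAt_rareWord_st_of_le (ha : ∀ n, 2 ≤ a n) {j n : ℕ} (hn : 1 ≤ n)
    (hnj : n ≤ j + 5) (i : ℕ) : ¬ IsInfixAt (rareWord a j) (st a n) i := fun h =>
  not_isInfixAt_rareWord_st ha j i (h.trans_isPrefix (st_prefix_st ha hn hnj))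

lemma card_add_one_mul_le_of_disjointOccurrences_rareWord (ha : ∀ n, 2 ≤ a n) {j n : ℕ}
    (hn : j + 5 ≤ n) {I : Finset ℕ} (hI : DisjointOccurrences (rareWord a j) (st a n) I) :
    (#I + 1) * (st a (j + 5)).length ≤ 2 * (st a n).length := by
  induction n using Nat.strong_induction_on generalizing I with
  | _ n ih =>
  have hfree : ∀ m, 1 ≤ m → m ≤ j + 5 → ∀ J,
      DisjointOccurrences (rareWord a j) (st a m) J →
        (#J + 1) * (st a (j + 5)).length ≤ (st a (j + 5)).length := fun m hm hmj J hJ => by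
    simp [hJ.eq_empty (not_isInfixAt_rareWord_st_of_le ha hm hmj)]
  obtain rfl | rfl | hn : n = j + 5 ∨ n = j + 6 ∨ j + 7 ≤ n := by omega
  · have := hfree (j + 5) (by omega) le_rfl I hI
    omega
  · have h₆ : st a (j + 6) = wpow (st a (j + 5)) (a (j + 5)) ++ st a (j + 4) :=
      st_add_three a (j + 3)
    rw [h₆] at hI
    have := hI.card_add_one_mul_le_of_wpow_append (hfree _ (by omega) le_rfl)
      (hfree _ (by omega) (by omega)) _
    have := Nat.le_mul_of_pos_left (st a (j + 5)).length (two_pos.trans_le (ha (j + 5)))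
    rw [h₆, List.length_append, length_wpow]
    omega
  · obtain ⟨m, rfl⟩ : ∃ m, n = m + 3 := ⟨n - 3, by omega⟩
    rw [st_add_three] at hI
    have := hI.card_add_one_mul_le_of_wpow_append
      (fun J hJ => ih (m + 2) (by omega) (by omega) hJ)
      (fun J hJ => ih (m + 1) (by omega) (by omega) hJ) _
    rw [length_st_add_three a m]
    linarith

lemma card_mul_le_of_disjointOccurrences_rareWord (ha : ∀ n, 2 ≤ a n) {j n : ℕ} (hn : 1 ≤ n)
    {I : Finset ℕ} (hI : DisjointOccurrences (rareWord a j) (st a n) I) :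
    #I * (st a (j + 5)).length ≤ 2 * (st a n).length := by
  rcases le_or_gt n (j + 5) with hnj | hnj
  · simp [hI.eq_empty (not_isInfixAt_rareWord_st_of_le ha hn hnj)]
  · have := card_add_one_mul_le_of_disjointOccurrences_rareWord ha hnj.le hI
    rw [add_one_mul] at this
    omega

lemma IsPacking.card_filter_mul_le (ha : ∀ n, 2 ≤ a n) {n : ℕ} (hn : 1 ≤ n)
    {P : Finset (ℕ × ℕ)} (hP : IsPacking (rareWord a) (st a n) P) (j : ℕ) :
    #{q ∈ P | q.2 = j} * (rareWord a j).length * a (j + 4) ≤ 6 * (st a n).length := by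
  obtain ⟨hI, hcard⟩ := hP.disjointOccurrences_fiber j
  have hc := card_mul_le_of_disjointOccurrences_rareWord ha hn hI
  rw [hcard] at hc
  have hU : (rareWord a j).length ≤ 3 * (st a (j + 4)).length := by
    have := length_rareWord a j
    have : (st a (j + 3)).length ≤ (st a (j + 4)).length :=
      monotone_length_st (fun n => one_le_two.trans (ha n)) (Nat.le_succ (j + 3))
    omega
  have h₅ : a (j + 4) * (st a (j + 4)).length ≤ (st a (j + 5)).length := by
    rw [length_st_add_three a (j + 2)]
    exact Nat.le_add_right _ _
  calc #{q ∈ P | q.2 = j} * (rareWord a j).length * a (j + 4)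
      ≤ #{q ∈ P | q.2 = j} * (3 * (st a (j + 4)).length) * a (j + 4) := by gcongr
    _ = 3 * (#{q ∈ P | q.2 = j} * (a (j + 4) * (st a (j + 4)).length)) := by ring
    _ ≤ 3 * (#{q ∈ P | q.2 = j} * (st a (j + 5)).length) := by gcongr
    _ ≤ 6 * (st a n).length := by omega

lemma maxCoverage_rareWord_st_le (ha : ∀ n, 2 ≤ a n)
    (hsum : Summable fun j => ((a (j + 4) : ℝ))⁻¹) {n : ℕ} (hn : 1 ≤ n) :
    (maxCoverage (rareWord a) (st a n) : ℝ) ≤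
      6 * (∑' j, ((a (j + 4) : ℝ))⁻¹) * (st a n).length := by
  classical
  obtain ⟨P, hP, hcov⟩ := exists_isPacking_coverage_eq_maxCoverage (rareWord a) (st a n)
  have hterm (j : ℕ) : (#{q ∈ P | q.2 = j} : ℝ) * (rareWord a j).length ≤
      6 * (st a n).length * ((a (j + 4) : ℝ))⁻¹ := by
    have hpos : (0 : ℝ) < a (j + 4) := by exact_mod_cast two_pos.trans_le (ha _)
    rw [le_mul_inv_iff₀ hpos]
    exact_mod_cast hP.card_filter_mul_le ha hn j
  rw [← hcov, coverage, sum_comp (fun j => (rareWord a j).length) Prod.snd]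
  push_cast [nsmul_eq_mul]
  calc ∑ j ∈ P.image Prod.snd, (#{q ∈ P | q.2 = j} : ℝ) * (rareWord a j).length
      ≤ ∑ j ∈ P.image Prod.snd, 6 * (st a n).length * ((a (j + 4) : ℝ))⁻¹ :=
        sum_le_sum fun j _ => hterm j
    _ = 6 * (st a n).length * ∑ j ∈ P.image Prod.snd, ((a (j + 4) : ℝ))⁻¹ := by
        rw [mul_sum]
    _ ≤ 6 * (st a n).length * ∑' j, ((a (j + 4) : ℝ))⁻¹ := by
        gcongr
        exact hsum.sum_le_tsum _ fun _ _ => by positivity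
    _ = _ := by ring

end Counting

lemma hasSum_inv_two_pow_add_five :
    HasSum (fun j : ℕ => (((2 : ℕ) ^ (j + 4 + 1) : ℕ) : ℝ)⁻¹) (1 / 16) := by
  have h : (fun j : ℕ => (((2 : ℕ) ^ (j + 4 + 1) : ℕ) : ℝ)⁻¹) = fun j => 1 / 32 * (1 / 2) ^ j := by
    funext j
    rw [one_div_pow, Nat.cast_pow, Nat.cast_ofNat, pow_add]
    ring
  rw [h, show (1 / 16 : ℝ) = 1 / 32 * 2 by norm_num]
  exact hasSum_geometric_two.mul_left _

/-- Theorem B.1. There are continued fraction coefficients `(a_n)` and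
a subadditive function `F` on the associated Sturmian words `𝒲(α)` along with two
sequences of words of lengths tending to infinity whose means `F(w)/|w|` have
`limsup` along the first strictly below `liminf` along the second; in particular the
uniform subadditive ergodic theorem fails for `𝒲(α)`. -/
theorem sturmian_subadditive_counterexample :
    ∃ (a : ℕ → ℕ), (∀ n, 1 ≤ a n) ∧
      ∃ F : List Bool → ℝ, WordSubadditive (sturmW a) F ∧
        ∃ w₁ w₂ : ℕ → List Bool,
          (∀ n, w₁ n ∈ sturmW a) ∧ (∀ n, w₂ n ∈ sturmW a) ∧
          Tendsto (fun n => (w₁ n).length) atTop atTop ∧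
          Tendsto (fun n => (w₂ n).length) atTop atTop ∧
          Filter.limsup (fun n => F (w₁ n) / (w₁ n).length) atTop <
            Filter.liminf (fun n => F (w₂ n) / (w₂ n).length) atTop := by
  set a : ℕ → ℕ := fun n => 2 ^ (n + 1)
  have ha (n : ℕ) : 2 ≤ a n := Nat.le_self_pow (Nat.succ_ne_zero n) 2
  have hcov (n : ℕ) : (maxCoverage (rareWord a) (st a (n + 1)) : ℝ) ≤
      3 / 8 * (st a (n + 1)).length := by
    have := maxCoverage_rareWord_st_le ha hasSum_inv_two_pow_add_five.summable (Nat.le_add_left 1 n)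
    rwa [hasSum_inv_two_pow_add_five.tsum_eq, show (6 : ℝ) * (1 / 16) = 3 / 8 by norm_num] at this
  refine ⟨a, fun n => one_le_two.trans (ha n), _,
    wordSubadditive_length_sub_maxCoverage (rareWord a) _, rareWord a, fun n => st a (n + 1),
    fun j => ⟨j + 6, by omega, rareWord_infix_st ha j⟩,
    fun n => ⟨n + 1, by omega, List.infix_refl _⟩, ?_, ?_, ?_⟩
  · refine tendsto_atTop_mono (fun j => ?_) tendsto_id
    have := length_rareWord a j
    have := le_length_st ha (j + 4)
    dsimp only [id]
    omega
  · exact tendsto_atTop_mono (fun n => (le_length_st ha (n + 1)).trans' n.le_succ) tendsto_id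
  · simp only [maxCoverage_self, sub_self, zero_div, limsup_const]
    calc (0 : ℝ) < 1 - 3 / 8 := by norm_num
      _ ≤ _ := le_liminf_length_sub_maxCoverage_div
        (fun n => List.ne_nil_of_length_pos (length_st_pos a (n + 1))) hcov

end
end

section
/- For every sequence (a_n)_{n≥1} of positive integers and every n ≥ 0, there is no nontrivial occurrence of s_n in s_n s_n: if s_n s_n = w_1 s_n w_2 for words w_1, w_2 over {0,1}, then w_1 is the empty word or w_2 is the empty word. -/
open Filter

noncomputable section

lemma wpow_length (w : List Bool) (n : ℕ) : (wpow w n).length = n * w.length := by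
  induction n with
  | zero => simp [wpow]
  | succ n ih => simp [wpow, ih]; ring

lemma wpow_count (w : List Bool) (b : Bool) (n : ℕ) :
    (wpow w n).count b = n * w.count b := by
  induction n with
  | zero => simp [wpow]
  | succ n ih => simp [wpow, ih, List.count_append]; ring

lemma wpow_add_s15 (w : List Bool) (m n : ℕ) :
    wpow w (m + n) = wpow w m ++ wpow w n := by
  induction m with
  | zero => simp [wpow]
  | succ m ih => simp [wpow, Nat.succ_add, ih]

/-- Commuting words are powers of a common word. -/
lemma comm_append_pow : ∀ N : ℕ, ∀ u v : List Bool, u.length + v.length ≤ N →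
    u ++ v = v ++ u → ∃ z : List Bool, ∃ k l : ℕ, u = wpow z k ∧ v = wpow z l := by
  intro N
  induction N with
  | zero =>
    intro u v hlen _
    have hu : u = [] := List.eq_nil_of_length_eq_zero (by omega)
    have hv : v = [] := List.eq_nil_of_length_eq_zero (by omega)
    exact ⟨[], 0, 0, by simp [hu, wpow], by simp [hv, wpow]⟩
  | succ N ih =>
    intro u v hlen h
    rcases eq_or_ne u [] with rfl | hu
    · exact ⟨v, 0, 1, by simp [wpow], by simp [wpow]⟩
    rcases eq_or_ne v [] with rfl | hv
    · exact ⟨u, 1, 0, by simp [wpow], by simp [wpow]⟩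
    rcases le_total u.length v.length with hle | hle
    · have hkey : u = v.take u.length := by
        have h1 := congrArg (List.take u.length) h
        rwa [List.take_append_of_le_length hle, List.take_left' rfl] at h1
      obtain ⟨v', hsplit⟩ : ∃ v', v = u ++ v' := by
        refine ⟨v.drop u.length, ?_⟩
        conv_lhs => rw [← List.take_append_drop u.length v, ← hkey]
      have hcomm : u ++ v' = v' ++ u := by
        apply List.append_cancel_left (as := u)
        have h2 : u ++ (u ++ v') = (u ++ v') ++ u := by rw [← hsplit]; exact h
        rw [h2, List.append_assoc]
      have hlen' : u.length + v'.length ≤ N := by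
        have h3 : 0 < u.length := List.length_pos_iff.mpr hu
        have h4 : v.length = u.length + v'.length := by rw [hsplit, List.length_append]
        omega
      obtain ⟨z, k, l, hu', hv'⟩ := ih u v' hlen' hcomm
      exact ⟨z, k, k + l, hu', by rw [hsplit, wpow_add_s15, hu', hv']⟩
    · have hkey : v = u.take v.length := by
        have h1 := congrArg (List.take v.length) h.symm
        rwa [List.take_append_of_le_length hle, List.take_left' rfl] at h1
      obtain ⟨u', hsplit⟩ : ∃ u', u = v ++ u' := by
        refine ⟨u.drop v.length, ?_⟩
        conv_lhs => rw [← List.take_append_drop v.length u, ← hkey]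
      have hcomm : v ++ u' = u' ++ v := by
        apply List.append_cancel_left (as := v)
        have h2 : v ++ (v ++ u') = (v ++ u') ++ v := by rw [← hsplit]; exact h.symm
        rw [h2, List.append_assoc]
      have hlen' : v.length + u'.length ≤ N := by
        have h3 : 0 < v.length := List.length_pos_iff.mpr hv
        have h4 : u.length = v.length + u'.length := by rw [hsplit, List.length_append]
        omega
      obtain ⟨z, k, l, hv', hu'⟩ := ih v u' hlen' hcomm
      exact ⟨z, k + l, k, by rw [hsplit, wpow_add_s15, hv', hu'], hv'⟩

lemma st_det (a : ℕ → ℕ) (ha : ∀ n, 1 ≤ a n) : ∀ k : ℕ,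
    ((st a (k + 1)).length : ℤ) * ((st a k).count true : ℤ) -
      ((st a k).length : ℤ) * ((st a (k + 1)).count true : ℤ) = (-1) ^ k := by
  intro k
  induction k with
  | zero => simp [st]
  | succ k ih =>
    match k with
    | 0 =>
      have h1 : (st a 2).length = a 1 := by
        simp [st, wpow_length]
        have := ha 1
        omega
      have h2 : (st a 2).count true = 1 := by
        simp [st, List.count_append, wpow_count]
      simp [h1, h2, st, wpow_count]
    | j + 1 =>
      have hL : ((st a (j + 3)).length : ℤ) =
          (a (j + 2) : ℤ) * (st a (j + 2)).length + (st a (j + 1)).length := by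
        show ((wpow (st a (j + 2)) (a (j + 2)) ++ st a (j + 1)).length : ℤ) = _
        push_cast [List.length_append, wpow_length]
        ring
      have hT : ((st a (j + 3)).count true : ℤ) =
          (a (j + 2) : ℤ) * (st a (j + 2)).count true + (st a (j + 1)).count true := by
        show (((wpow (st a (j + 2)) (a (j + 2)) ++ st a (j + 1)).count true : ℕ) : ℤ) = _
        push_cast [List.count_append, wpow_count]
        ring
      have : ((st a (j + 3)).length : ℤ) * ((st a (j + 2)).count true : ℤ) -
          ((st a (j + 2)).length : ℤ) * ((st a (j + 3)).count true : ℤ) =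
          -(((st a (j + 2)).length : ℤ) * ((st a (j + 1)).count true : ℤ) -
            ((st a (j + 1)).length : ℤ) * ((st a (j + 2)).count true : ℤ)) := by
        rw [hL, hT]; ring
      rw [this, ih]
      ring

lemma st_coprime (a : ℕ → ℕ) (ha : ∀ n, 1 ≤ a n) (k : ℕ) :
    Nat.gcd (st a k).length ((st a k).count true) = 1 := by
  set d := Nat.gcd (st a k).length ((st a k).count true) with hd
  have h1 : (d : ℤ) ∣ ((st a k).length : ℤ) := Int.natCast_dvd_natCast.mpr (Nat.gcd_dvd_left _ _)
  have h2 : (d : ℤ) ∣ ((st a k).count true : ℤ) := Int.natCast_dvd_natCast.mpr (Nat.gcd_dvd_right _ _)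
  have h3 : (d : ℤ) ∣ (-1) ^ k := by
    rw [← st_det a ha k]
    exact dvd_sub (Dvd.dvd.mul_left h2 _) (Dvd.dvd.mul_right h1 _)
  have h4 : d ∣ 1 := by
    have h5 := Int.natAbs_dvd_natAbs.mpr h3
    simpa [Int.natAbs_pow] using h5
  exact Nat.dvd_one.mp h4

/-- Proposition B.2 (ii). For every `n ≥ 0` there is no nontrivial
occurrence of `s_n` in `s_n s_n`: if `s_n s_n = w₁ s_n w₂` then `w₁` or `w₂` is empty.
(Here `s_n = st a (n+1)`, so the claim is stated for all indices `k ≥ 1` of `st`.) -/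
theorem sn_square_no_nontrivial_occurrence (a : ℕ → ℕ) (ha : ∀ n, 1 ≤ a n) :
    ∀ k : ℕ, 1 ≤ k → ∀ w₁ w₂ : List Bool,
      st a k ++ st a k = w₁ ++ st a k ++ w₂ → w₁ = [] ∨ w₂ = [] := by
  intro k hk w₁ w₂ h
  by_contra hcon
  push_neg at hcon
  obtain ⟨h1, h2⟩ := hcon
  set w := st a k with hw
  have hlen : w₁.length + w₂.length = w.length := by
    have hl := congrArg List.length h
    simp only [List.length_append] at hl
    omega
  have hle : w₁.length ≤ w.length := by omega
  have hw1 : w₁ = w.take w₁.length := by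
    have h3 := congrArg (List.take w₁.length) h.symm
    rwa [List.take_append_of_le_length hle, List.append_assoc,
      List.take_left' rfl] at h3
  have hsplit0 : w = w₁ ++ w.drop w₁.length := by
    conv_lhs => rw [← List.take_append_drop w₁.length w, ← hw1]
  have h4 : (w₁ ++ w) ++ w₂ = (w ++ w₁) ++ (w.drop w₁.length) := by
    calc (w₁ ++ w) ++ w₂ = w ++ w := h.symm
      _ = w ++ (w₁ ++ w.drop w₁.length) := by rw [← hsplit0]
      _ = (w ++ w₁) ++ (w.drop w₁.length) := by rw [List.append_assoc]
  have hw2 : w₂ = w.drop w₁.length := List.append_inj_right h4 (by simp [Nat.add_comm])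
  have hsplit : w = w₁ ++ w₂ := by
    rw [hw1, hw2, List.take_append_drop]
  have hcomm : w₁ ++ w₂ = w₂ ++ w₁ := by
    apply List.append_cancel_left (as := w₁)
    apply List.append_cancel_right (bs := w₂)
    calc (w₁ ++ (w₁ ++ w₂)) ++ w₂ = (w₁ ++ w) ++ w₂ := by rw [← hsplit]
      _ = w ++ w := h.symm
      _ = (w₁ ++ w₂) ++ (w₁ ++ w₂) := by rw [← hsplit]
      _ = (w₁ ++ (w₂ ++ w₁)) ++ w₂ := by simp [List.append_assoc]
  obtain ⟨z, m, l, hm, hl⟩ :=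
    comm_append_pow (w₁.length + w₂.length) w₁ w₂ le_rfl hcomm
  have hm1 : 1 ≤ m :=
    Nat.pos_of_ne_zero (fun h0 => h1 (by simpa [h0, wpow] using hm))
  have hl1 : 1 ≤ l :=
    Nat.pos_of_ne_zero (fun h0 => h2 (by simpa [h0, wpow] using hl))
  have hwz : w = wpow z (m + l) := by rw [hsplit, wpow_add_s15, hm, hl]
  have hdvd : (m + l) ∣ Nat.gcd w.length (w.count true) := by
    apply Nat.dvd_gcd
    · exact ⟨z.length, by rw [hwz, wpow_length]⟩
    · exact ⟨z.count true, by rw [hwz, wpow_count]⟩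
  rw [st_coprime a ha k] at hdvd
  have := Nat.le_of_dvd one_pos hdvd
  omega

end
end
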